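/- arXiv:1806.06115 — 7 statements merged into one kernel-verified Lean document; each statement's English description precedes it below -/
import Mathlib

section
/- For any integer N ≥ 1, the alternating-by-parity sum Σ_{r=0}^{N} C(N,r)·(-1)^(r(r-1)/2) equals 2^(N/2)·(cos(Nπ/4) + sin(Nπ/4)). -/
/-! Since `(-1) ^ (r choose 2)` runs through `1, 1, -1, -1` with period four, it equals
`Re (i ^ r) + Im (i ^ r)`. The binomial theorem turns the sum into `Re + Im` of
`(1 + i) ^ N = (√2) ^ N * exp (i N π / 4)`. -/

open Finset Real

namespace Complex

/-- The second conjunct is what makes the induction go through: multiplying by `i` sends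
`(re, im)` to `(-im, re)`. -/
lemma neg_one_pow_choose_two_eq_re_add_im_I_pow (r : ℕ) :
    (-1 : ℝ) ^ r.choose 2 = (I ^ r).re + (I ^ r).im ∧
      (-1 : ℝ) ^ r * (-1) ^ r.choose 2 = (I ^ r).re - (I ^ r).im := by
  induction r with
  | zero => simp
  | succ r ih =>
    have hpow : (-1 : ℝ) ^ (r + 1).choose 2 = (-1) ^ r * (-1) ^ r.choose 2 := by
      rw [Nat.choose_succ_succ', Nat.choose_one_right, pow_add, mul_comm]
    have hsq : ((-1 : ℝ) ^ r) ^ 2 = 1 := by rw [← pow_mul, mul_comm, pow_mul, neg_one_sq, one_pow]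
    simp only [hpow, pow_succ, mul_re, mul_im, I_re, I_im]
    exact ⟨by linear_combination ih.2, by linear_combination -(-1 : ℝ) ^ r.choose 2 * hsq - ih.1⟩

lemma sum_choose_mul_re_add_im_I_pow (N : ℕ) :
    ∑ r ∈ range (N + 1), (N.choose r : ℝ) * ((I ^ r).re + (I ^ r).im) =
      ((1 + I) ^ N).re + ((1 + I) ^ N).im := by
  rw [add_comm (1 : ℂ), add_pow, re_sum, im_sum, ← sum_add_distrib]
  refine sum_congr rfl fun r _ => ?_
  simp only [one_pow, mul_one, ← ofReal_natCast, re_mul_ofReal, im_mul_ofReal]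
  ring

lemma one_add_I_eq_sqrt_two_mul_exp : 1 + I = (√2 : ℂ) * exp (↑(π / 4) * I) := by
  rw [exp_mul_I, ← ofReal_cos, ← ofReal_sin, Real.cos_pi_div_four, Real.sin_pi_div_four]
  have h : ((√2 : ℝ) : ℂ) ^ 2 = 2 := by norm_cast; exact Real.sq_sqrt zero_le_two
  push_cast
  linear_combination -(1 + I) / 2 * h

lemma one_add_I_pow (N : ℕ) : (1 + I) ^ N = (√2 ^ N : ℝ) * exp (↑(N * π / 4) * I) := by
  rw [one_add_I_eq_sqrt_two_mul_exp, mul_pow, ← exp_nat_mul]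
  push_cast; ring_nf

end Complex

theorem binomial_alternating_triangular_sum_general (N : ℕ) :
    ∑ r ∈ Finset.range (N + 1), (N.choose r : ℝ) * (-1 : ℝ) ^ (r * (r - 1) / 2) =
      (Real.sqrt 2) ^ N * (Real.cos (N * π / 4) + Real.sin (N * π / 4)) := by
  simp_rw [← Nat.choose_two_right,
    fun r => (Complex.neg_one_pow_choose_two_eq_re_add_im_I_pow r).1,
    Complex.sum_choose_mul_re_add_im_I_pow, Complex.one_add_I_pow, Complex.re_ofReal_mul,
    Complex.im_ofReal_mul, Complex.exp_ofReal_mul_I_re, Complex.exp_ofReal_mul_I_im, mul_add]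

theorem binomial_alternating_triangular_sum (N : ℕ) (hN : 1 ≤ N) :
    ∑ r ∈ Finset.range (N + 1), (N.choose r : ℝ) * (-1 : ℝ) ^ (r * (r - 1) / 2) =
      (Real.sqrt 2) ^ N * (Real.cos (N * π / 4) + Real.sin (N * π / 4)) :=
  binomial_alternating_triangular_sum_general N
end

section
/- Let T be a finite abelian group and let β : T × T → {±1} be an alternating bicharacter (multiplicative in each variable, with β(u,u) = 1 for all u) whose radical {t ∈ T | β(u,t) = 1 for all u ∈ T} is trivial. Then the map sending u ∈ T to the subgroup u^⊥ = {v ∈ T | β(u,v) = 1} is a bijection from T onto the set of subgroups of T of index 1 or 2. -/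
private lemma sum_char_eq_zero {G : Type*} [CommGroup G] [Fintype G]
    (χ : G → ℤˣ) (hmul : ∀ a b, χ (a * b) = χ a * χ b)
    {s : G} (hs : χ s ≠ 1) : ∑ g : G, ((χ g : ℤ)) = 0 := by
  have h1 : ∑ g : G, ((χ (g * s) : ℤ)) = ∑ g : G, ((χ g : ℤ)) :=
    Fintype.sum_bijective (· * s) (Group.mulRight_bijective s)
      (fun g => ((χ (g * s) : ℤ))) _ (fun g => rfl)
  have h2 : ∑ g : G, ((χ (g * s) : ℤ)) = (χ s : ℤ) * ∑ g : G, ((χ g : ℤ)) := by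
    rw [Finset.mul_sum]
    refine Finset.sum_congr rfl fun g _ => ?_
    rw [hmul, mul_comm (χ g) (χ s)]
    push_cast
    ring
  have h3 : ((χ s : ℤ) - 1) * ∑ g : G, ((χ g : ℤ)) = 0 := by
    rw [sub_mul, one_mul, ← h2, h1, sub_self]
  rcases mul_eq_zero.mp h3 with h | h
  · have hx : ((χ s : ℤ)) = 1 := by linarith
    exact absurd (Units.ext (by simpa using hx)) hs
  · exact h

theorem alternating_bicharacter_perp_bijective
    {T : Type*} [CommGroup T] [Fintype T] (β : T → T → ℤˣ)
    (hmul₁ : ∀ u v w : T, β (u * v) w = β u w * β v w)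
    (hmul₂ : ∀ u v w : T, β u (v * w) = β u v * β u w)
    (halt : ∀ u : T, β u u = 1)
    (hrad : ∀ t : T, (∀ u : T, β u t = 1) → t = 1) :
    ∃ f : T → {S : Subgroup T // S.index = 1 ∨ S.index = 2},
      (∀ u v : T, v ∈ (f u : Subgroup T) ↔ β u v = 1) ∧ Function.Bijective f := by
  classical
  -- basic identities
  have hone : ∀ u : T, β u 1 = 1 := by
    intro u
    have h := hmul₂ u 1 1
    rw [one_mul] at h
    exact (left_eq_mul.mp h)
  have hone' : ∀ v : T, β 1 v = 1 := by
    intro v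
    have h := hmul₁ 1 1 v
    rw [one_mul] at h
    exact (left_eq_mul.mp h)
  have hsq : ∀ u v : T, β u v * β u v = 1 := fun u v => Int.units_mul_self _
  have hsymm : ∀ u v : T, β v u = β u v := by
    intro u v
    have h : β u v * β v u = 1 := by
      have h1 := halt (u * v)
      rw [hmul₁ u v (u * v), hmul₂ u u v, hmul₂ v u v, halt u, halt v, one_mul, mul_one] at h1
      exact h1
    calc β v u = (β u v * β u v) * β v u := by rw [hsq, one_mul]
      _ = β u v * (β u v * β v u) := by rw [mul_assoc]
      _ = β u v := by rw [h, mul_one]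
  have hinv : ∀ u v : T, β u⁻¹ v = β u v := by
    intro u v
    have h : β u v * β u⁻¹ v = 1 := by
      rw [← hmul₁, mul_inv_cancel, hone']
    calc β u⁻¹ v = (β u v * β u v) * β u⁻¹ v := by rw [hsq, one_mul]
      _ = β u v * (β u v * β u⁻¹ v) := by rw [mul_assoc]
      _ = β u v := by rw [h, mul_one]
  -- the character attached to u
  let χ : T → T →* ℤˣ := fun u =>
    { toFun := β u, map_one' := hone u, map_mul' := hmul₂ u }
  have hχ : ∀ u v : T, χ u v = β u v := fun _ _ => rfl
  have hmem : ∀ u v : T, v ∈ (χ u).ker ↔ β u v = 1 := fun u v => Iff.rfl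
  have hidx : ∀ u : T, (χ u).ker.index = 1 ∨ (χ u).ker.index = 2 := by
    intro u
    have h1 : (χ u).ker.index = Nat.card (χ u).range := Subgroup.index_ker (χ u)
    have h2 : Nat.card (χ u).range ∣ Nat.card ℤˣ := Subgroup.card_subgroup_dvd_card _
    have h3 : Nat.card ℤˣ = 2 := by simp
    rw [h3] at h2
    rw [h1]
    exact (Nat.prime_two.eq_one_or_self_of_dvd _ h2)
  refine ⟨fun u => ⟨(χ u).ker, hidx u⟩, fun u v => hmem u v, ?_, ?_⟩
  · -- injective
    intro u v h
    have hS : (χ u).ker = (χ v).ker := congrArg Subtype.val h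
    have key : u * v⁻¹ = 1 := by
      apply hrad
      intro w
      rw [hsymm]
      have : β (u * v⁻¹) w = β u w * β v w := by rw [hmul₁, hinv]
      rw [this]
      rcases Int.units_eq_one_or (β u w) with h1 | h1
      · have hw : w ∈ (χ u).ker := h1
        rw [hS] at hw
        have hw' : β v w = 1 := hw
        rw [h1, hw', mul_one]
      · rcases Int.units_eq_one_or (β v w) with h2 | h2
        · have hw : w ∈ (χ v).ker := h2
          rw [← hS] at hw
          have hw' : β u w = 1 := hw
          rw [hw'] at h1
          exact absurd h1 (by decide)
        · rw [h1, h2]; decide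
    rw [mul_inv_eq_one] at key
    exact key
  · -- surjective
    rintro ⟨S, hS⟩
    rcases hS with h1 | h2
    · refine ⟨1, Subtype.ext ?_⟩
      have hStop : S = ⊤ := Subgroup.index_eq_one.mp h1
      show (χ 1).ker = S
      rw [hStop]
      ext w
      simp only [Subgroup.mem_top, iff_true]
      exact hone' w
    · -- find u ≠ 1 with β u v = 1 for all v ∈ S
      have hu : ∃ u : T, u ≠ 1 ∧ ∀ v ∈ S, β u v = 1 := by
        by_contra hcon
        push_neg at hcon
        have eval1 : ∑ u : T, ∑ v : S, ((β u v : ℤ)) = (Nat.card S : ℤ) := by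
          rw [Finset.sum_eq_single (1 : T)]
          · simp [hone', Nat.card_eq_fintype_card]
          · intro u _ hu1
            obtain ⟨v, hvS, hv⟩ := hcon u hu1
            exact sum_char_eq_zero (fun x : S => β u x)
              (fun a b => hmul₂ u (a : T) (b : T)) (s := ⟨v, hvS⟩) hv
          · intro h; exact absurd (Finset.mem_univ 1) h
        have eval2 : ∑ u : T, ∑ v : S, ((β u v : ℤ)) = (Nat.card T : ℤ) := by
          rw [Finset.sum_comm]
          rw [Finset.sum_eq_single (1 : S)]
          · simp [hone, Nat.card_eq_fintype_card]
          · intro v _ hv1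
            have hvT : (v : T) ≠ 1 := by
              simpa using hv1
            have hex : ∃ u : T, β u (v : T) ≠ 1 := by
              by_contra hall
              push_neg at hall
              exact hvT (hrad _ hall)
            obtain ⟨u, hu⟩ := hex
            exact sum_char_eq_zero (fun x : T => β x (v : T))
              (fun a b => hmul₁ a b v) hu
          · intro h; exact absurd (Finset.mem_univ (1 : S)) h
        have hcard : S.index * Nat.card S = Nat.card T := Subgroup.index_mul_card S
        rw [h2] at hcard
        have hEq : (Nat.card S : ℤ) = (Nat.card T : ℤ) := by rw [← eval1, eval2]
        have hEq' : Nat.card S = Nat.card T := by exact_mod_cast hEq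
        have hpos : 0 < Nat.card S := Nat.card_pos
        omega
      obtain ⟨u, hu1, huS⟩ := hu
      refine ⟨u, Subtype.ext ?_⟩
      have hle : S ≤ (χ u).ker := fun v hv => huS v hv
      have hne : (χ u).ker ≠ ⊤ := by
        intro htop
        apply hu1
        apply hrad
        intro w
        rw [hsymm]
        have : w ∈ (χ u).ker := htop ▸ Subgroup.mem_top w
        exact this
      rcases hidx u with hk1 | hk2
      · exact absurd (Subgroup.index_eq_one.mp hk1) hne
      · have hrel := Subgroup.relIndex_mul_index hle
        rw [hk2, h2] at hrel
        have hrel1 : S.relIndex (χ u).ker = 1 := by omega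
        exact le_antisymm (Subgroup.relIndex_eq_one.mp hrel1) hle
end

section
/- Every finite-dimensional associative division algebra over ℝ is isomorphic (as an ℝ-algebra) to ℝ, ℂ, or the quaternions ℍ. -/
/-!
Every `a : D` is algebraic of degree at most two over `ℝ`, so some real shift `a - c` squares
to a non-positive real; call such elements imaginary. Imaginary elements are closed under
addition (compare the quadratic relations satisfied by `x + y` and `x - y`), so `x * y + y * x`
is real for imaginary `x`, `y`, and Gram–Schmidt applies to this form. A square root `i` of `-1`
exists unless `D = ℝ`; an imaginary direction outside `ℝ + ℝ i` yields `j` with `j * j = -1` and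
`j * i = -(i * j)`; and an imaginary element anticommuting with `i` and `j` commutes with `i * j`,
so it is a real multiple of `i * j`. Hence `D` is spanned by `1`, by `1, i`, or by
`1, i, j, i * j`.
-/

namespace RealDivisionAlgebra

open Polynomial

lemma nonempty_algEquiv_of_surjective {R A B : Type*} [CommSemiring R] [DivisionRing A]
    [Semiring B] [Nontrivial B] [Algebra R A] [Algebra R B] (f : A →ₐ[R] B)
    (hf : Function.Surjective f) : Nonempty (B ≃ₐ[R] A) :=
  ⟨(AlgEquiv.ofBijective f ⟨f.toRingHom.injective, hf⟩).symm⟩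

section Ring

variable {A : Type*} [Ring A] [Algebra ℝ A]

def IsImaginary (x : A) : Prop := ∃ u : ℝ, u ≤ 0 ∧ x * x = u • 1

lemma isImaginary_of_mul_self_eq_neg_one {x : A} (h : x * x = -1) : IsImaginary x :=
  ⟨-1, by norm_num, by rw [h, neg_one_smul]⟩

lemma IsImaginary.smul {x : A} (hx : IsImaginary x) (c : ℝ) : IsImaginary (c • x) := by
  obtain ⟨u, hu, hxx⟩ := hx
  exact ⟨c * c * u, mul_nonpos_of_nonneg_of_nonpos (mul_self_nonneg c) hu,
    by rw [smul_mul_smul_comm, hxx, smul_smul]⟩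

lemma mul_self_sub_smul_one (a : A) (c : ℝ) :
    (a - c • 1) * (a - c • 1) = a * a - (2 * c) • a + (c * c) • 1 := by
  simp only [mul_sub, sub_mul, smul_mul_assoc, mul_smul_comm, mul_one, one_mul]
  module

end Ring

variable {D : Type*} [DivisionRing D] [Algebra ℝ D]

lemma IsImaginary.exists_smul_mul_self_eq_neg_one {x : D} (hx : IsImaginary x) (hx0 : x ≠ 0) :
    ∃ t : ℝ, (t • x) * (t • x) = -1 := by
  obtain ⟨u, hu, hxx⟩ := hx
  have hu' : u < 0 := hu.lt_of_ne <| by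
    rintro rfl
    exact hx0 (mul_self_eq_zero.mp (by rw [hxx, zero_smul]))
  refine ⟨(√(-u))⁻¹, ?_⟩
  have ht : (√(-u))⁻¹ * (√(-u))⁻¹ * u = -1 := by
    rw [← mul_inv, Real.mul_self_sqrt (by linarith), inv_mul_eq_div, div_neg, div_self hu'.ne]
  rw [smul_mul_smul_comm, hxx, smul_smul, ht, neg_one_smul]

lemma eq_zero_of_isImaginary_smul_one {r : ℝ} (h : IsImaginary (r • 1 : D)) : r = 0 := by
  obtain ⟨u, hu, hr⟩ := h
  rw [smul_mul_smul_comm, one_mul] at hr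
  have := smul_left_injective ℝ (one_ne_zero (α := D)) hr
  nlinarith

lemma IsImaginary.eq_zero_of_sub_smul_one {x : D} {r : ℝ} (hx : IsImaginary x)
    (hxr : IsImaginary (x - r • 1)) : r = 0 := by
  obtain ⟨u, -, hxx⟩ := id hx
  obtain ⟨v, -, hv⟩ := id hxr
  by_contra hr
  rw [mul_self_sub_smul_one, hxx] at hv
  have h2 : (2 * r) • x = (u + r * r - v) • 1 := by linear_combination (norm := module) -hv
  have hx_real : x = ((2 * r)⁻¹ * (u + r * r - v)) • 1 := by
    rw [← smul_smul, ← h2, inv_smul_smul₀ (mul_ne_zero two_ne_zero hr)]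
  have hx0 : x = 0 := by
    rw [hx_real] at hx ⊢
    rw [eq_zero_of_isImaginary_smul_one hx, zero_smul]
  rw [hx0, zero_sub, ← neg_smul] at hxr
  exact hr (neg_eq_zero.mp (eq_zero_of_isImaginary_smul_one hxr))

lemma exists_eq_smul_one_of_mul_self_eq {x : D} {d : ℝ} (hd : 0 ≤ d) (h : x * x = d • 1) :
    ∃ r : ℝ, x = r • 1 := by
  have hfactor : (x - √d • 1) * (x + √d • 1) = 0 := by
    calc (x - √d • 1) * (x + √d • 1) = x * x - (√d * √d) • 1 := by
          simp only [mul_add, sub_mul, smul_mul_assoc, mul_smul_comm, mul_one, one_mul]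
          module
      _ = 0 := by rw [h, Real.mul_self_sqrt hd, sub_self]
  rcases mul_eq_zero.mp hfactor with h | h
  · exact ⟨√d, sub_eq_zero.mp h⟩
  · exact ⟨-√d, by linear_combination (norm := module) h⟩

variable [FiniteDimensional ℝ D]

lemma exists_mul_self_eq_smul_add_smul_one (a : D) : ∃ p q : ℝ, a * a = p • a + q • 1 := by
  have ha : IsIntegral ℝ a := Algebra.IsIntegral.isIntegral a
  have hdeg : (X ^ 2 %ₘ minpoly ℝ a).natDegree ≤ 1 := by
    have := natDegree_modByMonic_lt (X ^ 2) (minpoly.monic ha) (minpoly.ne_one ℝ a)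
    have := (minpoly.irreducible ha).natDegree_le_two
    omega
  obtain ⟨p, q, hpq⟩ := exists_eq_X_add_C_of_natDegree_le_one hdeg
  have h := aeval_modByMonic_eq_self_of_root (p := X ^ 2) (minpoly.aeval ℝ a)
  rw [hpq] at h
  refine ⟨p, q, ?_⟩
  simpa [pow_two, Algebra.smul_def, eq_comm] using h

lemma exists_isImaginary_sub_smul_one (a : D) : ∃ c : ℝ, IsImaginary (a - c • 1) := by
  obtain ⟨p, q, h⟩ := exists_mul_self_eq_smul_add_smul_one a
  have hsq : (a - (p / 2) • 1) * (a - (p / 2) • 1) = (q + p / 2 * (p / 2)) • 1 := by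
    rw [mul_self_sub_smul_one, h]
    module
  rcases le_total (q + p / 2 * (p / 2)) 0 with hd | hd
  · exact ⟨p / 2, _, hd, hsq⟩
  · obtain ⟨r, hr⟩ := exists_eq_smul_one_of_mul_self_eq hd hsq
    refine ⟨p / 2 + r, 0, le_rfl, ?_⟩
    have ha : a - (p / 2 + r) • 1 = 0 := by linear_combination (norm := module) hr
    rw [ha, mul_zero, zero_smul]

lemma IsImaginary.add {x y : D} (hx : IsImaginary x) (hy : IsImaginary y) :
    IsImaginary (x + y) := by
  by_cases hind : LinearIndependent ℝ ![x, y]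
  · obtain ⟨c₁, u₁, hu₁, h₁⟩ := exists_isImaginary_sub_smul_one (x + y)
    obtain ⟨c₂, u₂, -, h₂⟩ := exists_isImaginary_sub_smul_one (x - y)
    obtain ⟨ux, -, hxx⟩ := id hx
    obtain ⟨uy, -, hyy⟩ := id hy
    rw [mul_self_sub_smul_one] at h₁ h₂
    simp only [add_mul, mul_add, sub_mul, mul_sub, hxx, hyy] at h₁ h₂
    -- adding the two quadratic relations eliminates `x * y + y * x`
    set ρ : ℝ := ux + uy + (c₁ * c₁ + c₂ * c₂ - u₁ - u₂) / 2
    have hρ : (c₁ + c₂) • x + (c₁ - c₂) • y = ρ • 1 := by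
      linear_combination (norm := module) (-(1 / 2 : ℝ)) • (h₁ + h₂)
    have hρ0 : ρ = 0 := by
      refine (hx.smul (c₁ + c₂)).eq_zero_of_sub_smul_one ?_
      rw [show (c₁ + c₂) • x - ρ • 1 = (-(c₁ - c₂)) • y by
        linear_combination (norm := module) hρ]
      exact hy.smul _
    obtain ⟨hs, ht⟩ := LinearIndependent.pair_iff.mp hind _ _ (by rw [hρ, hρ0, zero_smul])
    obtain rfl : c₁ = 0 := by linarith
    refine ⟨u₁, hu₁, ?_⟩
    simp only [add_mul, mul_add, hxx, hyy]
    linear_combination (norm := module) h₁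
  · by_cases hx0 : x = 0
    · rwa [hx0, zero_add]
    obtain ⟨a, rfl⟩ : ∃ a : ℝ, a • x = y := by
      simpa [LinearIndependent.pair_iff' hx0] using hind
    rw [show x + a • x = (1 + a) • x by module]
    exact hx.smul _

lemma IsImaginary.exists_mul_add_mul_eq_smul_one {x y : D} (hx : IsImaginary x)
    (hy : IsImaginary y) : ∃ r : ℝ, x * y + y * x = r • 1 := by
  obtain ⟨u, -, h⟩ := hx.add hy
  obtain ⟨ux, -, hxx⟩ := hx
  obtain ⟨uy, -, hyy⟩ := hy
  refine ⟨u - ux - uy, ?_⟩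
  simp only [add_mul, mul_add, hxx, hyy] at h
  linear_combination (norm := module) h

lemma exists_add_smul_anticomm {e y : D} (he : e * e = -1) (hy : IsImaginary y) :
    ∃ t : ℝ, (y + t • e) * e = -(e * (y + t • e)) := by
  obtain ⟨r, hr⟩ := hy.exists_mul_add_mul_eq_smul_one (isImaginary_of_mul_self_eq_neg_one he)
  refine ⟨r / 2, ?_⟩
  simp only [add_mul, mul_add, smul_mul_assoc, mul_smul_comm, he]
  linear_combination (norm := module) hr

lemma exists_mul_self_eq_neg_one {a : D} (ha : a ∉ Set.range (algebraMap ℝ D)) :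
    ∃ i : D, i * i = -1 := by
  obtain ⟨c, hc⟩ := exists_isImaginary_sub_smul_one a
  have hne : a - c • 1 ≠ 0 := fun h0 ↦
    ha ⟨c, by rw [Algebra.algebraMap_eq_smul_one, eq_comm, ← sub_eq_zero, h0]⟩
  obtain ⟨t, ht⟩ := hc.exists_smul_mul_self_eq_neg_one hne
  exact ⟨_, ht⟩

lemma exists_mul_self_eq_neg_one_anticomm {i y : D} (hi : i * i = -1)
    (hy : y ∉ Set.range (Complex.liftAux i hi)) : ∃ j : D, j * j = -1 ∧ j * i = -(i * j) := by
  obtain ⟨c, hc⟩ := exists_isImaginary_sub_smul_one y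
  obtain ⟨t, ht⟩ := exists_add_smul_anticomm hi hc
  have hne : y - c • 1 + t • i ≠ 0 := fun h0 ↦ by
    refine hy ⟨⟨c, -t⟩, ?_⟩
    rw [Complex.liftAux_apply, Algebra.algebraMap_eq_smul_one]
    linear_combination (norm := module) -h0
  obtain ⟨s, hs⟩ := (hc.add ((isImaginary_of_mul_self_eq_neg_one hi).smul t))
    |>.exists_smul_mul_self_eq_neg_one hne
  refine ⟨_, hs, ?_⟩
  rw [smul_mul_assoc, ht, mul_smul_comm, smul_neg]

lemma exists_eq_smul_mul_of_anticomm {i j w : D} (hi : i * i = -1) (hj : j * j = -1)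
    (hji : j * i = -(i * j)) (hw : IsImaginary w) (hwi : w * i = -(i * w))
    (hwj : w * j = -(j * w)) : ∃ t : ℝ, w = t • (i * j) := by
  have hk : (i * j) * (i * j) = -1 := by
    calc (i * j) * (i * j) = i * (j * i) * j := by noncomm_ring
      _ = -((i * i) * (j * j)) := by rw [hji]; noncomm_ring
      _ = -1 := by rw [hi, hj]; noncomm_ring
  have hwk : w * (i * j) = (i * j) * w := by
    calc w * (i * j) = (w * i) * j := by noncomm_ring
      _ = -(i * (w * j)) := by rw [hwi]; noncomm_ring
      _ = i * (j * w) := by rw [hwj]; noncomm_ring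
      _ = (i * j) * w := by noncomm_ring
  obtain ⟨r, hr⟩ := hw.exists_mul_add_mul_eq_smul_one (isImaginary_of_mul_self_eq_neg_one hk)
  rw [← hwk] at hr
  have hwk' : w * (i * j) = (r / 2) • 1 := by
    linear_combination (norm := module) (1 / 2 : ℝ) • hr
  refine ⟨-(r / 2), ?_⟩
  calc w = -(w * (i * j) * (i * j)) := by rw [mul_assoc, hk, mul_neg_one, neg_neg]
    _ = -(r / 2) • (i * j) := by rw [hwk', smul_mul_assoc, one_mul, neg_smul]

lemma liftHom_surjective (B : QuaternionAlgebra.Basis D (-1 : ℝ) 0 (-1)) :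
    Function.Surjective B.liftHom := by
  have hi : B.i * B.i = -1 := by rw [B.i_mul_i, zero_smul, add_zero, neg_one_smul]
  have hj : B.j * B.j = -1 := by rw [B.j_mul_j, neg_one_smul]
  have hji : B.j * B.i = -(B.i * B.j) := by rw [B.j_mul_i, B.i_mul_j, zero_smul, zero_sub]
  intro b
  obtain ⟨c, hc⟩ := exists_isImaginary_sub_smul_one b
  obtain ⟨t₁, ht₁⟩ := exists_add_smul_anticomm hi hc
  have hc₁ := hc.add ((isImaginary_of_mul_self_eq_neg_one hi).smul t₁)
  obtain ⟨t₂, ht₂⟩ := exists_add_smul_anticomm hj hc₁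
  set w := b - c • 1 + t₁ • B.i + t₂ • B.j with hw
  have hwi : w * B.i = -(B.i * w) := by
    rw [hw, add_mul, mul_add, ht₁, smul_mul_assoc, mul_smul_comm, hji]
    module
  obtain ⟨t₃, ht₃⟩ := exists_eq_smul_mul_of_anticomm hi hj hji
    (hc₁.add ((isImaginary_of_mul_self_eq_neg_one hj).smul t₂)) hwi ht₂
  refine ⟨⟨c, -t₁, -t₂, t₃⟩, ?_⟩
  simp only [QuaternionAlgebra.Basis.liftHom_apply, QuaternionAlgebra.Basis.lift,
    Algebra.algebraMap_eq_smul_one, ← B.i_mul_j]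
  linear_combination (norm := module) -ht₃

end RealDivisionAlgebra

open RealDivisionAlgebra in
/-- Frobenius' theorem: every finite-dimensional associative division algebra over `ℝ`
is isomorphic to `ℝ`, `ℂ` or the quaternions `ℍ`. -/
theorem frobenius_real_division_algebras
    (D : Type) [DivisionRing D] [Algebra ℝ D] [FiniteDimensional ℝ D] :
    Nonempty (D ≃ₐ[ℝ] ℝ) ∨ Nonempty (D ≃ₐ[ℝ] ℂ) ∨ Nonempty (D ≃ₐ[ℝ] Quaternion ℝ) := by
  by_cases hR : Function.Surjective (Algebra.ofId ℝ D)
  · exact .inl (nonempty_algEquiv_of_surjective _ hR)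
  obtain ⟨a, ha⟩ := not_forall.mp hR
  obtain ⟨i, hi⟩ := exists_mul_self_eq_neg_one ha
  by_cases hC : Function.Surjective (Complex.liftAux i hi)
  · exact .inr (.inl (nonempty_algEquiv_of_surjective _ hC))
  obtain ⟨y, hy⟩ := not_forall.mp hC
  obtain ⟨j, hj, hji⟩ := exists_mul_self_eq_neg_one_anticomm hi hy
  let B : QuaternionAlgebra.Basis D (-1 : ℝ) 0 (-1) :=
    { i, j, k := i * j
      i_mul_i := by rw [hi, zero_smul, add_zero, neg_one_smul]
      j_mul_j := by rw [hj, neg_one_smul]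
      i_mul_j := rfl
      j_mul_i := by rw [hji, zero_smul, zero_sub] }
  exact .inr (.inr (nonempty_algEquiv_of_surjective _ (liftHom_surjective B)))
end

section
/- Let V be an N-dimensional vector space over a field F of characteristic ≠ 2 with a nondegenerate quadratic form Q. Then the center of the Clifford algebra Cl(V,Q) has dimension 1 if N is even and dimension 2 if N is odd. -/
/-!
Take a basis `b` of `V` orthogonal for the polar form; nondegeneracy gives `Q (b i) ≠ 0`. The
ordered monomials `e_s = ι (b i₁) ⋯ ι (b iₖ)`, `s = {i₁ < ⋯ < iₖ}`, span `Cl(V, Q)`, and there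
are `2 ^ N = dim ΛV = dim Cl(V, Q)` of them, so they form a basis. Conjugation `x ↦ ι (b i) * x * ι (b i)` acts on `e_s` by `(-1) ^ |s \ {i}| • Q (b i)` and on
central elements by `Q (b i)`; as `-Q (b i) ≠ Q (b i)`, the center is spanned by the `e_s` with
`|s \ {i}|` even for every `i`. These are `s = ∅` and, when `N` is odd, `s = univ`.
-/

open Module Submodule Finset

theorem Module.Basis.repr_eq_zero_of_mem_eigenspace {R M ι : Type*} [CommRing R]
    [NoZeroDivisors R] [AddCommGroup M] [Module R M] (B : Basis ι R M) {f : Module.End R M}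
    {d : ι → R} (hf : ∀ j, f (B j) = d j • B j) {μ : R} {x : M} (hx : x ∈ f.eigenspace μ)
    {j : ι} (hj : d j ≠ μ) : B.repr x j = 0 := by
  classical
  have hcoord : B.coord j ∘ₗ f = d j • B.coord j := B.ext fun k => by
    by_cases hk : k = j <;> simp [hf, hk]
  have := LinearMap.congr_fun hcoord x
  simp only [LinearMap.comp_apply, Module.End.mem_eigenspace_iff.mp hx, map_smul,
    LinearMap.smul_apply, Basis.coord_apply, smul_eq_mul] at this
  exact (mul_eq_mul_right_iff.mp this).resolve_left hj.symm

theorem Module.Basis.finrank_span_image_finset {R M ι : Type*} [Ring R] [Nontrivial R]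
    [StrongRankCondition R] [AddCommGroup M] [Module R M] (B : Basis ι R M) (s : Finset ι) :
    finrank R (span R (B '' s)) = s.card := by
  rw [Set.image_eq_range, ← Fintype.card_coe s]
  exact finrank_span_eq_card (B.linearIndependent.comp _ Subtype.val_injective)

theorem Finset.forall_even_card_erase_iff {κ : Type*} [Fintype κ] [DecidableEq κ]
    {s : Finset κ} : (∀ i, Even (s.erase i).card) ↔ s = ∅ ∨ s = univ ∧ Odd (Fintype.card κ) := by
  constructor
  · intro h
    rcases s.eq_empty_or_nonempty with rfl | ⟨i, hi⟩
    · exact Or.inl rfl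
    have hodd : Odd s.card := by
      obtain ⟨k, hk⟩ := h i
      have := card_pos.mpr ⟨i, hi⟩
      rw [card_erase_of_mem hi] at hk
      exact ⟨k, by omega⟩
    have huniv : s = univ := eq_univ_iff_forall.mpr fun j => by
      by_contra hj
      exact Nat.not_even_iff_odd.mpr hodd (erase_eq_of_notMem hj ▸ h j)
    exact Or.inr ⟨huniv, by rwa [← card_univ, ← huniv]⟩
  · rintro (rfl | ⟨rfl, hodd⟩) i
    · simp
    · rw [card_erase_of_mem (mem_univ i), card_univ]
      exact Nat.Odd.sub_odd hodd odd_one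

theorem Finset.card_filter_forall_even_card_erase {κ : Type*} [Fintype κ] [DecidableEq κ] :
    #{s : Finset κ | ∀ i, Even (s.erase i).card} = if Even (Fintype.card κ) then 1 else 2 := by
  simp_rw [forall_even_card_erase_iff]
  split_ifs with h
  · convert card_singleton (∅ : Finset κ)
    ext s
    simp [Nat.not_odd_iff_even.mpr h]
  · have hne : (∅ : Finset κ) ≠ univ := by
      have : Nonempty κ :=
        Fintype.card_pos_iff.mp (Nat.pos_of_ne_zero fun h0 => h (h0 ▸ Even.zero))
      exact univ_nonempty.ne_empty.symm
    convert card_pair hne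
    ext s
    simp [Nat.not_even_iff_odd.mp h]

namespace CliffordAlgebra

section CommRing

variable {R M κ : Type*} [CommRing R] [AddCommGroup M] [Module R M] {Q : QuadraticForm R M}
  {b : κ → M}

theorem ι_mul_ι_of_polarBilin_eq_zero {x y : M} (h : QuadraticMap.polarBilin Q x y = 0) :
    ι Q x * ι Q y = -(ι Q y * ι Q x) :=
  ι_mul_ι_comm_of_isOrtho (QuadraticMap.isOrtho_polarBilin.mp h)

theorem ι_mul_prod_map_ι [DecidableEq κ] (hb : (QuadraticMap.polarBilin Q).IsOrthoᵢ b) (i : κ)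
    (l : List κ) :
    ι Q (b i) * (l.map fun j => ι Q (b j)).prod =
      (-1 : R) ^ l.countP (· ≠ i) • ((l.map fun j => ι Q (b j)).prod * ι Q (b i)) := by
  induction l with
  | nil => simp
  | cons j l ih =>
    rw [List.map_cons, List.prod_cons, ← mul_assoc]
    by_cases hji : j = i
    · subst hji
      rw [List.countP_cons_of_neg (by simp)]
      conv_lhs => rw [mul_assoc, ih, mul_smul_comm]
      rw [mul_assoc]
    · rw [List.countP_cons_of_pos (by simpa using hji), ι_mul_ι_of_polarBilin_eq_zero
        (hb (Ne.symm hji)), neg_mul, mul_assoc, ih, mul_smul_comm, pow_succ, mul_neg_one,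
        neg_smul, mul_assoc]

theorem prod_map_ι_mem_span_of_perm (hb : (QuadraticMap.polarBilin Q).IsOrthoᵢ b)
    {l l' : List κ} (h : l.Perm l') :
    (l.map fun j => ι Q (b j)).prod ∈ R ∙ (l'.map fun j => ι Q (b j)).prod := by
  induction h with
  | nil => exact mem_span_singleton_self _
  | cons x _ ih =>
    obtain ⟨c, hc⟩ := mem_span_singleton.mp ih
    exact mem_span_singleton.mpr ⟨c, by simp [← hc]⟩
  | swap x y l =>
    classical
    refine mem_span_singleton.mpr ⟨if x = y then 1 else -1, ?_⟩
    split_ifs with hxy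
    · simp [hxy]
    · simp [← mul_assoc, ι_mul_ι_of_polarBilin_eq_zero (hb (Ne.symm hxy))]
  | trans _ _ ih₁ ih₂ => exact span_singleton_le_iff_mem _ _ |>.mpr ih₂ ih₁

theorem finrank_eq_two_pow [Invertible (2 : R)] [StrongRankCondition R] [Module.Free R M]
    [Module.Finite R M] : finrank R (CliffordAlgebra Q) = 2 ^ finrank R M := by
  rw [(equivExterior Q).finrank_eq, finrank_eq_card_basis (finBasis R M).ExteriorAlgebra,
    Fintype.card_finset, Fintype.card_fin]

theorem mem_center_of_commute_ι (hspan : span R (Set.range b) = ⊤) {x : CliffordAlgebra Q}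
    (h : ∀ i, Commute (ι Q (b i)) x) : x ∈ Subalgebra.center R (CliffordAlgebra Q) := by
  have hι : ∀ v, Commute (ι Q v) x := fun v => by
    induction (hspan ▸ mem_top : v ∈ span R (Set.range b)) using
      span_induction with
    | mem _ hv => obtain ⟨i, rfl⟩ := hv; exact h i
    | zero => simp
    | add _ _ _ _ h₁ h₂ => rw [map_add]; exact h₁.add_left h₂
    | smul c _ _ h => rw [map_smul]; exact h.smul_left c
  refine Subalgebra.mem_center_iff.mpr fun y => ?_
  induction y using CliffordAlgebra.induction with
  | algebraMap r => exact Algebra.commutes r x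
  | ι v => exact hι v
  | mul y z hy hz => exact Commute.mul_left hy hz
  | add y z hy hz => exact Commute.add_left hy hz

variable [LinearOrder κ]

variable (Q b) in
noncomputable def monomial (s : Finset κ) : CliffordAlgebra Q :=
  ((s.sort (· ≤ ·)).map fun j => ι Q (b j)).prod

theorem ι_mul_monomial (hb : (QuadraticMap.polarBilin Q).IsOrthoᵢ b) (i : κ) (s : Finset κ) :
    ι Q (b i) * monomial Q b s = (-1 : R) ^ (s.erase i).card • (monomial Q b s * ι Q (b i)) := by
  classical
  rw [monomial, ι_mul_prod_map_ι hb, ← filter_ne', card_def, filter_val,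
    ← Multiset.countP_eq_card_filter, ← sort_eq s (· ≤ ·), Multiset.coe_countP]

theorem ι_mul_monomial_mem_span (hb : (QuadraticMap.polarBilin Q).IsOrthoᵢ b) (i : κ)
    (s : Finset κ) : ι Q (b i) * monomial Q b s ∈ span R (Set.range (monomial Q b)) := by
  classical
  by_cases hi : i ∈ s
  · have hperm : (s.sort (· ≤ ·)).Perm (i :: (s.erase i).sort (· ≤ ·)) :=
      List.perm_of_nodup_nodup_toFinset_eq (sort_nodup _ _)
        (by simp [sort_nodup]) (by simp [hi])
    obtain ⟨c, hc⟩ := mem_span_singleton.mp (prod_map_ι_mem_span_of_perm hb hperm)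
    have : ι Q (b i) * monomial Q b s = (c * Q (b i)) • monomial Q b (s.erase i) := by
      rw [monomial, ← hc, List.map_cons, List.prod_cons, mul_smul_comm, ← mul_assoc, ι_sq_scalar,
        Algebra.algebraMap_eq_smul_one, smul_one_mul, smul_smul, monomial]
    rw [this]
    exact smul_mem _ _ (subset_span ⟨_, rfl⟩)
  · have hperm : (i :: s.sort (· ≤ ·)).Perm ((insert i s).sort (· ≤ ·)) :=
      List.perm_of_nodup_nodup_toFinset_eq (by simp [hi, sort_nodup])
        (sort_nodup _ _) (by simp)
    refine (span_singleton_le_iff_mem (monomial Q b (insert i s)) _).mpr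
      (subset_span (Set.mem_range_self _)) ?_
    simpa [monomial] using prod_map_ι_mem_span_of_perm hb hperm

theorem span_monomial_eq_top (hb : (QuadraticMap.polarBilin Q).IsOrthoᵢ b)
    (hspan : span R (Set.range b) = ⊤) : span R (Set.range (monomial Q b)) = ⊤ := by
  set W := span R (Set.range (monomial Q b))
  have hι : ∀ v, ∀ w ∈ W, ι Q v * w ∈ W := by
    intro v
    induction (hspan ▸ mem_top : v ∈ span R (Set.range b)) using
      span_induction with
    | mem _ hv =>
      obtain ⟨i, rfl⟩ := hv
      intro w hw
      induction hw using span_induction with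
      | mem _ hw => obtain ⟨s, rfl⟩ := hw; exact ι_mul_monomial_mem_span hb i s
      | zero => simp
      | add _ _ _ _ h₁ h₂ => rw [mul_add]; exact W.add_mem h₁ h₂
      | smul c _ _ h => rw [mul_smul_comm]; exact W.smul_mem c h
    | zero => simp
    | add _ _ _ _ h₁ h₂ => intro w hw; rw [map_add, add_mul]; exact W.add_mem (h₁ w hw) (h₂ w hw)
    | smul c _ _ h => intro w hw; rw [map_smul, smul_mul_assoc]; exact W.smul_mem c (h w hw)
  have hmul : ∀ x : CliffordAlgebra Q, ∀ w ∈ W, x * w ∈ W := by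
    intro x
    induction x using CliffordAlgebra.induction with
    | algebraMap r =>
      intro w hw
      rw [Algebra.algebraMap_eq_smul_one, smul_one_mul]
      exact W.smul_mem r hw
    | ι v => exact hι v
    | mul x y hx hy => intro w hw; rw [mul_assoc]; exact hx _ (hy w hw)
    | add x y hx hy => intro w hw; rw [add_mul]; exact W.add_mem (hx w hw) (hy w hw)
  have hone : (1 : CliffordAlgebra Q) ∈ W := subset_span ⟨∅, by simp [monomial]⟩
  exact eq_top_iff.mpr fun x _ => by simpa using hmul x 1 hone

theorem monomial_mem_center (hspan : span R (Set.range b) = ⊤)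
    (hb : (QuadraticMap.polarBilin Q).IsOrthoᵢ b) {s : Finset κ}
    (hs : ∀ i, Even (s.erase i).card) : monomial Q b s ∈ Subalgebra.center R (CliffordAlgebra Q) :=
  mem_center_of_commute_ι hspan fun i => by
    rw [Commute, SemiconjBy, ι_mul_monomial hb, (hs i).neg_one_pow, one_smul]

end CommRing

section Field

variable {K V κ : Type*} [Field K] [AddCommGroup V] [Module K V] {Q : QuadraticForm K V}

variable [Fintype κ] [LinearOrder κ] {b : Basis κ K V}

noncomputable def monomialBasis [Invertible (2 : K)]
    (hb : (QuadraticMap.polarBilin Q).IsOrthoᵢ b) : Basis (Finset κ) K (CliffordAlgebra Q) :=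
  haveI := Module.Finite.of_basis b
  basisOfTopLeSpanOfCardEqFinrank (monomial Q b) (span_monomial_eq_top hb b.span_eq).ge
    (by rw [Fintype.card_finset, finrank_eq_two_pow, finrank_eq_card_basis b])

@[simp]
theorem coe_monomialBasis [Invertible (2 : K)] (hb : (QuadraticMap.polarBilin Q).IsOrthoᵢ b) :
    ⇑(monomialBasis hb) = monomial Q b :=
  coe_basisOfTopLeSpanOfCardEqFinrank _ _ _

theorem monomialBasis_repr_eq_zero_of_mem_center [Invertible (2 : K)]
    (hb : (QuadraticMap.polarBilin Q).IsOrthoᵢ b) (hQ : ∀ i, Q (b i) ≠ 0) {x : CliffordAlgebra Q}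
    (hx : x ∈ Subalgebra.center K (CliffordAlgebra Q)) {s : Finset κ} {i : κ}
    (hi : Odd (s.erase i).card) : (monomialBasis hb).repr x s = 0 := by
  set e := ι Q (b i)
  refine (monomialBasis hb).repr_eq_zero_of_mem_eigenspace
    (f := LinearMap.mulLeft K e ∘ₗ LinearMap.mulRight K e)
    (d := fun t => (-1) ^ (t.erase i).card * Q (b i)) (μ := Q (b i)) (fun t => ?_) ?_ ?_
  · simp only [coe_monomialBasis, LinearMap.comp_apply, LinearMap.mulLeft_apply,
      LinearMap.mulRight_apply]
    rw [← mul_assoc, ι_mul_monomial hb, smul_mul_assoc, mul_assoc, ι_sq_scalar,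
      Algebra.algebraMap_eq_smul_one, mul_smul_comm, mul_one, smul_smul]
  · rw [Module.End.mem_eigenspace_iff, LinearMap.comp_apply, LinearMap.mulLeft_apply,
      LinearMap.mulRight_apply, ← mul_assoc, Subalgebra.mem_center_iff.mp hx e, mul_assoc,
      ι_sq_scalar, Algebra.algebraMap_eq_smul_one, mul_smul_comm, mul_one]
  · rw [hi.neg_one_pow, neg_one_mul, Ne, neg_eq_iff_add_eq_zero, ← two_mul]
    exact mul_ne_zero (Invertible.ne_zero 2) (hQ i)

theorem toSubmodule_center_eq_span_monomial [Invertible (2 : K)]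
    (hb : (QuadraticMap.polarBilin Q).IsOrthoᵢ b) (hQ : ∀ i, Q (b i) ≠ 0) :
    Subalgebra.toSubmodule (Subalgebra.center K (CliffordAlgebra Q)) =
      span K (monomial Q b '' {s | ∀ i, Even (s.erase i).card}) := by
  refine le_antisymm (fun x hx => ?_)
    (span_le.mpr (Set.image_subset_iff.mpr fun s hs => monomial_mem_center b.span_eq hb hs))
  rw [← coe_monomialBasis hb, Basis.mem_span_image]
  intro s hs
  by_contra hbad
  obtain ⟨i, hi⟩ := not_forall.mp hbad
  exact Finsupp.mem_support_iff.mp hs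
    (monomialBasis_repr_eq_zero_of_mem_center hb hQ hx (Nat.not_even_iff_odd.mp hi))

theorem finrank_center [Invertible (2 : K)] (hb : (QuadraticMap.polarBilin Q).IsOrthoᵢ b)
    (hQ : ∀ i, Q (b i) ≠ 0) :
    finrank K (Subalgebra.center K (CliffordAlgebra Q)) =
      if Even (Fintype.card κ) then 1 else 2 := by
  classical
  rw [← Subalgebra.finrank_toSubmodule, toSubmodule_center_eq_span_monomial hb hQ,
    ← coe_monomialBasis hb, ← coe_filter_univ, Basis.finrank_span_image_finset,
    card_filter_forall_even_card_erase]

end Field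

end CliffordAlgebra

theorem cliffordAlgebra_center_finrank
    (F : Type) [Field F] (hchar : (2 : F) ≠ 0)
    (V : Type) [AddCommGroup V] [Module F V] [FiniteDimensional F V]
    (Q : QuadraticForm F V)
    (hQ : (QuadraticMap.polarBilin Q).Nondegenerate) :
    Module.finrank F (Subalgebra.center F (CliffordAlgebra Q)) =
      if Even (Module.finrank F V) then 1 else 2 := by
  have : Invertible (2 : F) := invertibleOfNonzero hchar
  obtain ⟨b, hb⟩ := LinearMap.BilinForm.exists_orthogonal_basis
    (B := QuadraticMap.polarBilin Q) ⟨QuadraticMap.polar_comm Q⟩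
  have hQb : ∀ i, Q (b i) ≠ 0 := fun i hi =>
    LinearMap.BilinForm.iIsOrtho.not_isOrtho_basis_self_of_nondegenerate hb hQ i
      (by simp [QuadraticMap.polar_self, hi])
  rw [CliffordAlgebra.finrank_center hb hQb, Fintype.card_fin]
end

section
/- For all natural numbers p, q, there is an isomorphism of real algebras Cl_{p+1,q+1}(ℝ) ≅ Cl_{p,q}(ℝ) ⊗_ℝ M₂(ℝ). -/
open scoped TensorProduct

/-- The real Clifford algebra `Cl_{p,q}(ℝ)` of the quadratic form
`x₁² + … + x_p² − x_{p+1}² − … − x_{p+q}²`. -/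
abbrev CliffordPQ (p q : ℕ) : Type :=
  CliffordAlgebra (QuadraticMap.weightedSumSquares ℝ
    (fun i : Fin (p + q) => if (i : ℕ) < p then (1 : ℝ) else -1))

/-!
Write `Cl_{p+1,q+1}(ℝ)` as the Clifford algebra of `Q ⊥ (x² - y²)` with `Q` of signature
`(p, q)`, and let `f, g` be the images of the two new basis vectors, so `f² = 1`, `g² = -1`,
`fg = -gf`. Such a pair generates a copy of `M₂(ℝ)` (`f ↦ [[0,1],[1,0]]`, `g ↦ [[0,1],[-1,0]]`),
and the elements `v · fg` for `v` in the first summand still square to `Q v` while commuting with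
`f` and `g`. This gives `Cl(Q) ⊗ M₂(ℝ) → Cl_{p+1,q+1}(ℝ)`; in the other direction
`v ↦ v ⊗ FG`, `f ↦ 1 ⊗ F`, `g ↦ 1 ⊗ G` is a Clifford map. Both composites fix generators.
-/

theorem Commute.mul_left_of_anticomm {A : Type*} [Ring A] {a b c : A}
    (ha : a * c = -(c * a)) (hb : b * c = -(c * b)) : Commute (a * b) c := by
  rw [Commute, SemiconjBy, mul_assoc, hb, mul_neg, ← mul_assoc, ha, neg_mul, neg_neg, mul_assoc]

theorem mul_self_add_of_anticomm {A : Type*} [Ring A] {a b : A} (h : a * b = -(b * a)) :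
    (a + b) * (a + b) = a * a + b * b := by
  rw [add_mul, mul_add, mul_add, h]; abel

/-- `f` and `g` satisfy the relations of an orthonormal basis of the plane with form `x² - y²`. -/
structure IsHyperbolicPair {A : Type*} [Ring A] (f g : A) : Prop where
  mul_self_left : f * f = 1
  mul_self_right : g * g = -1
  anticomm : f * g = -(g * f)

namespace IsHyperbolicPair

variable {R A B : Type*} [CommRing R] [Ring A] [Algebra R A] [Ring B] [Algebra R B]
  {f g c : A} (h : IsHyperbolicPair f g)
include h

theorem anticomm' : g * f = -(f * g) := by
  rw [h.anticomm, neg_neg]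

theorem mul_mul_self : f * g * (f * g) = 1 := by
  rw [← mul_assoc, mul_assoc f, h.anticomm', mul_neg, ← mul_assoc, h.mul_self_left, one_mul,
    neg_mul, h.mul_self_right, neg_neg]

theorem left_anticomm : f * g * f = -(f * (f * g)) := by
  rw [mul_assoc, ← neg_neg (g * f), ← h.anticomm, mul_neg]

theorem right_anticomm : f * g * g = -(g * (f * g)) := by
  rw [mul_assoc, h.mul_self_right, ← mul_assoc, h.anticomm', neg_mul, mul_assoc,
    h.mul_self_right, neg_neg]

theorem map (φ : A →ₐ[R] B) : IsHyperbolicPair (φ f) (φ g) where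
  mul_self_left := by rw [← map_mul, h.mul_self_left, map_one]
  mul_self_right := by rw [← map_mul, h.mul_self_right, map_neg, map_one]
  anticomm := by rw [← map_mul, h.anticomm, map_neg, map_mul]

theorem smul_add_smul_mul_self (a b : R) :
    (a • f + b • g) * (a • f + b • g) = algebraMap R A (a * a - b * b) := by
  rw [mul_self_add_of_anticomm (by rw [smul_mul_smul_comm, smul_mul_smul_comm, h.anticomm,
      smul_neg, mul_comm]),
    smul_mul_smul_comm, smul_mul_smul_comm, h.mul_self_left, h.mul_self_right, map_sub,
    Algebra.algebraMap_eq_smul_one, Algebra.algebraMap_eq_smul_one, smul_neg, sub_eq_add_neg]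

theorem mul_mul_self_of_commute (hc : Commute c (f * g)) :
    c * (f * g) * (c * (f * g)) = c * c := by
  rw [mul_assoc, ← mul_assoc (f * g), ← hc.eq, mul_assoc, h.mul_mul_self, mul_one]

theorem mul_self_add_smul_add_smul (hf : Commute c f) (hg : Commute c g) (a b : R) :
    (c * (f * g) + (a • f + b • g)) * (c * (f * g) + (a • f + b • g)) =
      c * c + algebraMap R A (a * a - b * b) := by
  have hω : (f * g) * (a • f + b • g) = -((a • f + b • g) * (f * g)) := by
    rw [mul_add, add_mul, mul_smul_comm, mul_smul_comm, smul_mul_assoc, smul_mul_assoc,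
      h.left_anticomm, h.right_anticomm, neg_add, smul_neg, smul_neg]
  rw [mul_self_add_of_anticomm, h.mul_mul_self_of_commute (hf.mul_right hg),
    h.smul_add_smul_mul_self]
  rw [mul_assoc, hω, mul_neg, neg_inj]
  simp only [← mul_assoc, ((hf.smul_right a).add_right (hg.smul_right b)).eq]

end IsHyperbolicPair

section PairExpansion

variable {R A B : Type*} [CommRing R] [Ring A] [Algebra R A] [Ring B] [Algebra R B]

/-- Twice the image of `m` under the algebra map `M₂(R) → A` with `hypX ↦ f`, `hypY ↦ g`; the
factor `2` keeps `pairExpansion_mul` free of `⅟2`. -/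
def pairExpansion (f g : A) : Matrix (Fin 2) (Fin 2) R →ₗ[R] A where
  toFun m := (m 0 0 + m 1 1) • 1 + (m 0 1 + m 1 0) • f + (m 0 1 - m 1 0) • g
    + (m 1 1 - m 0 0) • (f * g)
  map_add' x y := by
    simp only [Matrix.add_apply]
    match_scalars <;> ring
  map_smul' r x := by
    simp only [Matrix.smul_apply, smul_eq_mul, RingHom.id_apply, smul_add]
    match_scalars <;> ring

theorem AlgHom.map_pairExpansion (φ : A →ₐ[R] B) (f g : A) (m : Matrix (Fin 2) (Fin 2) R) :
    φ (pairExpansion f g m) = pairExpansion (φ f) (φ g) m := by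
  simp [pairExpansion]

theorem Commute.pairExpansion_right {c f g : A} (hf : Commute c f) (hg : Commute c g)
    (m : Matrix (Fin 2) (Fin 2) R) : Commute c (pairExpansion f g m) :=
  ((((Commute.one_right c).smul_right _).add_right (hf.smul_right _)).add_right
    (hg.smul_right _)).add_right ((hf.mul_right hg).smul_right _)

theorem IsHyperbolicPair.pairExpansion_mul {f g : A} (h : IsHyperbolicPair f g)
    (x y : Matrix (Fin 2) (Fin 2) R) :
    (2 : R) • pairExpansion f g (x * y) = pairExpansion f g x * pairExpansion f g y := by
  have hffg : f * (f * g) = g := by rw [← mul_assoc, h.mul_self_left, one_mul]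
  have hfgf : f * g * f = -g := by rw [h.left_anticomm, hffg]
  have hgfg : g * (f * g) = f := by
    rw [← mul_assoc, h.anticomm', neg_mul, mul_assoc, h.mul_self_right, mul_neg_one, neg_neg]
  have hfgg : f * g * g = -f := by rw [h.right_anticomm, hgfg]
  simp only [pairExpansion, LinearMap.coe_mk, AddHom.coe_mk, Matrix.mul_apply, Fin.sum_univ_two,
    add_mul, mul_add, smul_mul_assoc, mul_smul_comm, one_mul, mul_one,
    h.mul_self_left, h.mul_self_right, h.anticomm', hffg, hfgf, hgfg, hfgg, h.mul_mul_self,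
    smul_neg]
  match_scalars <;> ring

end PairExpansion

namespace Matrix

variable (R : Type*) [CommRing R]

def hypX : Matrix (Fin 2) (Fin 2) R := !![0, 1; 1, 0]

def hypY : Matrix (Fin 2) (Fin 2) R := !![0, 1; -1, 0]

theorem isHyperbolicPair_hypX_hypY : IsHyperbolicPair (hypX R) (hypY R) where
  mul_self_left := by simp [hypX, one_fin_two]
  mul_self_right := by simp [hypY, one_fin_two]
  anticomm := by simp [hypX, hypY]

variable {R}

theorem pairExpansion_hypX_hypY (m : Matrix (Fin 2) (Fin 2) R) :
    pairExpansion (hypX R) (hypY R) m = (2 : R) • m := by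
  ext i j
  fin_cases i <;> fin_cases j <;> simp [pairExpansion, hypX, hypY] <;> ring

theorem algHom_ext_fin_two [Invertible (2 : R)] {A : Type*} [Ring A] [Algebra R A]
    {φ ψ : Matrix (Fin 2) (Fin 2) R →ₐ[R] A} (hX : φ (hypX R) = ψ (hypX R))
    (hY : φ (hypY R) = ψ (hypY R)) : φ = ψ := by
  ext m : 1
  have hm : m = ⅟(2 : R) • pairExpansion (hypX R) (hypY R) m := by
    rw [pairExpansion_hypX_hypY, smul_smul, invOf_mul_self, one_smul]
  rw [hm, map_smul, map_smul, φ.map_pairExpansion, ψ.map_pairExpansion, hX, hY]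

end Matrix

namespace IsHyperbolicPair

variable {R A : Type*} [CommRing R] [Invertible (2 : R)] [Ring A] [Algebra R A] {f g : A}

def matrixLift (h : IsHyperbolicPair f g) : Matrix (Fin 2) (Fin 2) R →ₐ[R] A :=
  AlgHom.ofLinearMap (⅟(2 : R) • pairExpansion f g)
    (by simp [pairExpansion, smul_smul, one_add_one_eq_two])
    (fun x y => by
      simp only [LinearMap.smul_apply, smul_mul_smul_comm, ← h.pairExpansion_mul, smul_smul,
        mul_assoc, invOf_mul_self, mul_one])

theorem matrixLift_apply (h : IsHyperbolicPair f g) (m : Matrix (Fin 2) (Fin 2) R) :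
    h.matrixLift m = ⅟(2 : R) • pairExpansion f g m := rfl

theorem matrixLift_hypX (h : IsHyperbolicPair f g) : h.matrixLift (Matrix.hypX R) = f := by
  simp [matrixLift_apply, pairExpansion, Matrix.hypX, smul_smul, one_add_one_eq_two]

theorem matrixLift_hypY (h : IsHyperbolicPair f g) : h.matrixLift (Matrix.hypY R) = g := by
  simp [matrixLift_apply, pairExpansion, Matrix.hypY, smul_smul, one_add_one_eq_two]

theorem commute_matrixLift {c : A} (h : IsHyperbolicPair f g) (hf : Commute c f)
    (hg : Commute c g) (m : Matrix (Fin 2) (Fin 2) R) : Commute c (h.matrixLift m) :=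
  (hf.pairExpansion_right hg m).smul_right _

end IsHyperbolicPair

def finSumFinTwoEquiv (p q : ℕ) : Fin (p + q) ⊕ Fin 2 ≃ Fin (p + 1 + (q + 1)) :=
  ((Equiv.sumCongr finSumFinEquiv.symm (finSumFinEquiv (m := 1) (n := 1)).symm).trans
    (Equiv.sumSumSumComm _ _ _ _)).trans
    ((Equiv.sumCongr finSumFinEquiv finSumFinEquiv).trans finSumFinEquiv)

def signWeights (R : Type*) [CommRing R] (p q : ℕ) (i : Fin (p + q)) : R :=
  if (i : ℕ) < p then 1 else -1

theorem signWeights_finSumFinTwoEquiv {R : Type*} [CommRing R] (p q : ℕ)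
    (x : Fin (p + q) ⊕ Fin 2) :
    signWeights R (p + 1) (q + 1) (finSumFinTwoEquiv p q x) =
      Sum.elim (signWeights R p q) ![1, -1] x := by
  unfold signWeights
  rcases x with i | j
  · induction i using Fin.addCases with
    | left i => simp [finSumFinTwoEquiv]
    | right i => simp [finSumFinTwoEquiv, add_assoc]
  · have h0 : (finSumFinEquiv (m := 1) (n := 1)).symm 0 = Sum.inl 0 := rfl
    have h1 : (finSumFinEquiv (m := 1) (n := 1)).symm 1 = Sum.inr 0 := rfl
    fin_cases j
    · simp [finSumFinTwoEquiv, h0]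
    · simp [finSumFinTwoEquiv, h1, add_assoc]

namespace QuadraticMap

def sqSubSq (R : Type*) [CommRing R] : QuadraticForm R (Fin 2 → R) :=
  weightedSumSquares R ![(1 : R), -1]

theorem sqSubSq_apply {R : Type*} [CommRing R] (v : Fin 2 → R) :
    sqSubSq R v = v 0 * v 0 - v 1 * v 1 := by
  simp [sqSubSq, weightedSumSquares_apply, sub_eq_add_neg]

section WeightedSumSquares

variable {ι κ R : Type*} [Fintype ι] [Fintype κ] [CommSemiring R]

def isometryEquivWeightedSumSquaresOfEquiv (σ : ι ≃ κ) {w : ι → R} {w' : κ → R}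
    (h : ∀ i, w' (σ i) = w i) :
    (weightedSumSquares R w).IsometryEquiv (weightedSumSquares R w') where
  toLinearEquiv := LinearEquiv.funCongrLeft R R σ.symm
  map_app' x := by
    rw [weightedSumSquares_apply, weightedSumSquares_apply]
    change ∑ k, w' k • (x (σ.symm k) * x (σ.symm k)) = ∑ i, w i • (x i * x i)
    simp only [← σ.sum_comp, h, Equiv.symm_apply_apply]

def isometryEquivWeightedSumSquaresSumElim (w₁ : ι → R) (w₂ : κ → R) :
    (weightedSumSquares R (Sum.elim w₁ w₂)).IsometryEquiv
      ((weightedSumSquares R w₁).prod (weightedSumSquares R w₂)) where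
  toLinearEquiv := LinearEquiv.sumArrowLequivProdArrow ι κ R R
  map_app' x := by
    simp [weightedSumSquares_apply, Fintype.sum_sum_type]

end WeightedSumSquares

def isometryEquivSignWeightsSuccSucc (R : Type*) [CommRing R] (p q : ℕ) :
    (weightedSumSquares R (signWeights R (p + 1) (q + 1))).IsometryEquiv
      ((weightedSumSquares R (signWeights R p q)).prod (sqSubSq R)) :=
  (isometryEquivWeightedSumSquaresOfEquiv (finSumFinTwoEquiv p q)
    (signWeights_finSumFinTwoEquiv p q)).symm.trans
    (isometryEquivWeightedSumSquaresSumElim _ _)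

end QuadraticMap

namespace CliffordAlgebra

open QuadraticMap

variable {R M B : Type*} [CommRing R] [AddCommGroup M] [Module R M] {Q : QuadraticForm R M}
  [Ring B] [Algebra R B]

theorem isHyperbolicPair_ι_inr :
    IsHyperbolicPair (ι (Q.prod (sqSubSq R)) (0, Pi.single 0 1))
      (ι (Q.prod (sqSubSq R)) (0, Pi.single 1 1)) where
  mul_self_left := by simp [ι_sq_scalar, sqSubSq_apply]
  mul_self_right := by simp [ι_sq_scalar, sqSubSq_apply]
  anticomm := eq_neg_of_add_eq_zero_left <| ι_mul_ι_add_swap_of_isOrtho <| by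
    simp [QuadraticMap.isOrtho_def, sqSubSq_apply]

theorem ι_inl_anticomm_ι_inr (m : M) (v : Fin 2 → R) :
    ι (Q.prod (sqSubSq R)) (m, 0) * ι _ (0, v) = -(ι _ (0, v) * ι _ (m, 0)) :=
  eq_neg_of_add_eq_zero_left <| ι_mul_ι_add_swap_of_isOrtho <| IsOrtho.inl_inr m v

/-- The twist by `f * g` makes the image of `M` anticommute with `f` and `g`. -/
def liftProdSqSubSq (c : M →ₗ[R] B) (hc : ∀ m, c m * c m = algebraMap R B (Q m)) {f g : B}
    (h : IsHyperbolicPair f g) (hf : ∀ m, Commute (c m) f) (hg : ∀ m, Commute (c m) g) :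
    CliffordAlgebra (Q.prod (sqSubSq R)) →ₐ[R] B :=
  lift _ ⟨(LinearMap.mulRight R (f * g) ∘ₗ c).coprod (Fintype.linearCombination R ![f, g]),
    fun x => by
      simp only [LinearMap.coprod_apply, LinearMap.comp_apply, LinearMap.mulRight_apply,
        Fintype.linearCombination_apply, Fin.sum_univ_two, Matrix.cons_val_zero,
        Matrix.cons_val_one, h.mul_self_add_smul_add_smul (hf x.1) (hg x.1), hc, prod_apply,
        sqSubSq_apply, map_add]⟩

section liftProdSqSubSq

variable (c : M →ₗ[R] B) (hc : ∀ m, c m * c m = algebraMap R B (Q m)) {f g : B}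
    (h : IsHyperbolicPair f g) (hf : ∀ m, Commute (c m) f) (hg : ∀ m, Commute (c m) g)

theorem liftProdSqSubSq_ι_inl (m : M) :
    liftProdSqSubSq c hc h hf hg (ι _ (m, 0)) = c m * (f * g) := by
  simp [liftProdSqSubSq, mul_assoc]

theorem liftProdSqSubSq_ι_inr_zero :
    liftProdSqSubSq c hc h hf hg (ι _ (0, Pi.single 0 1)) = f := by
  simp [liftProdSqSubSq]

theorem liftProdSqSubSq_ι_inr_one :
    liftProdSqSubSq c hc h hf hg (ι _ (0, Pi.single 1 1)) = g := by
  simp [liftProdSqSubSq]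

end liftProdSqSubSq

variable (Q)

open Algebra.TensorProduct in
def toTensorMatrix :
    CliffordAlgebra (Q.prod (sqSubSq R)) →ₐ[R] CliffordAlgebra Q ⊗[R] Matrix (Fin 2) (Fin 2) R :=
  liftProdSqSubSq ((includeLeft : CliffordAlgebra Q →ₐ[R] _).toLinearMap ∘ₗ ι Q)
    (fun m => by simp [ι_sq_scalar])
    ((Matrix.isHyperbolicPair_hypX_hypY R).map includeRight)
    (fun m => (Commute.one_right (ι Q m)).tmul (Commute.one_left (Matrix.hypX R)))
    (fun m => (Commute.one_right (ι Q m)).tmul (Commute.one_left (Matrix.hypY R)))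

theorem toTensorMatrix_ι_inl (m : M) :
    toTensorMatrix Q (ι _ (m, 0)) = ι Q m ⊗ₜ (Matrix.hypX R * Matrix.hypY R) := by
  simp [toTensorMatrix, liftProdSqSubSq_ι_inl]

theorem toTensorMatrix_ι_inr_zero :
    toTensorMatrix Q (ι _ (0, Pi.single 0 1)) = 1 ⊗ₜ Matrix.hypX R := by
  simp [toTensorMatrix, liftProdSqSubSq_ι_inr_zero]

theorem toTensorMatrix_ι_inr_one :
    toTensorMatrix Q (ι _ (0, Pi.single 1 1)) = 1 ⊗ₜ Matrix.hypY R := by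
  simp [toTensorMatrix, liftProdSqSubSq_ι_inr_one]

def ofTensorMatrixLeft : CliffordAlgebra Q →ₐ[R] CliffordAlgebra (Q.prod (sqSubSq R)) :=
  lift Q ⟨LinearMap.mulRight R (ι _ (0, Pi.single 0 1) * ι _ (0, Pi.single 1 1)) ∘ₗ
      ι _ ∘ₗ LinearMap.inl R M _, fun m => by
    simp only [LinearMap.comp_apply, LinearMap.inl_apply, LinearMap.mulRight_apply]
    rw [isHyperbolicPair_ι_inr.mul_mul_self_of_commute
      (Commute.mul_left_of_anticomm (neg_eq_iff_eq_neg.mp (ι_inl_anticomm_ι_inr m _).symm)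
        (neg_eq_iff_eq_neg.mp (ι_inl_anticomm_ι_inr m _).symm)).symm, ι_sq_scalar]
    simp⟩

theorem ofTensorMatrixLeft_ι (m : M) : ofTensorMatrixLeft Q (ι Q m) =
    ι _ (m, 0) * (ι _ (0, Pi.single 0 1) * ι _ (0, Pi.single 1 1)) :=
  lift_ι_apply _ _ m

theorem commute_ofTensorMatrixLeft_ι_inr (x : CliffordAlgebra Q) (i : Fin 2) :
    Commute (ofTensorMatrixLeft Q x) (ι _ (0, Pi.single i 1)) := by
  induction x using CliffordAlgebra.induction with
  | algebraMap r => rw [AlgHom.commutes]; exact Algebra.commute_algebraMap_left r _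
  | ι m =>
    rw [ofTensorMatrixLeft_ι]
    refine Commute.mul_left_of_anticomm (ι_inl_anticomm_ι_inr (Q := Q) m _) ?_
    fin_cases i
    · exact isHyperbolicPair_ι_inr.left_anticomm
    · exact isHyperbolicPair_ι_inr.right_anticomm
  | mul x y hx hy => rw [map_mul]; exact hx.mul_left hy
  | add x y hx hy => rw [map_add]; exact hx.add_left hy

variable [Invertible (2 : R)]

def ofTensorMatrix :
    CliffordAlgebra Q ⊗[R] Matrix (Fin 2) (Fin 2) R →ₐ[R] CliffordAlgebra (Q.prod (sqSubSq R)) :=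
  Algebra.TensorProduct.lift (ofTensorMatrixLeft Q) isHyperbolicPair_ι_inr.matrixLift
    fun x => isHyperbolicPair_ι_inr.commute_matrixLift (commute_ofTensorMatrixLeft_ι_inr Q x 0)
      (commute_ofTensorMatrixLeft_ι_inr Q x 1)

theorem ofTensorMatrix_tmul (x : CliffordAlgebra Q) (m : Matrix (Fin 2) (Fin 2) R) :
    ofTensorMatrix Q (x ⊗ₜ m) = ofTensorMatrixLeft Q x * isHyperbolicPair_ι_inr.matrixLift m :=
  Algebra.TensorProduct.lift_tmul _ _ _ _ _

theorem ofTensorMatrix_comp_toTensorMatrix :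
    (ofTensorMatrix Q).comp (toTensorMatrix Q) = AlgHom.id R _ := by
  refine hom_ext <| LinearMap.prod_ext (LinearMap.ext fun m => ?_) <| LinearMap.pi_ext' <|
    Fin.forall_fin_two.mpr ⟨LinearMap.ext_ring ?_, LinearMap.ext_ring ?_⟩
  · show ofTensorMatrix Q (toTensorMatrix Q (ι _ (m, 0))) = ι _ (m, 0)
    rw [toTensorMatrix_ι_inl, ofTensorMatrix_tmul, ofTensorMatrixLeft_ι, map_mul,
      IsHyperbolicPair.matrixLift_hypX, IsHyperbolicPair.matrixLift_hypY, mul_assoc,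
      isHyperbolicPair_ι_inr.mul_mul_self, mul_one]
  · show ofTensorMatrix Q (toTensorMatrix Q (ι _ (0, Pi.single 0 1))) = ι _ (0, Pi.single 0 1)
    rw [toTensorMatrix_ι_inr_zero, ofTensorMatrix_tmul, map_one, one_mul,
      IsHyperbolicPair.matrixLift_hypX]
  · show ofTensorMatrix Q (toTensorMatrix Q (ι _ (0, Pi.single 1 1))) = ι _ (0, Pi.single 1 1)
    rw [toTensorMatrix_ι_inr_one, ofTensorMatrix_tmul, map_one, one_mul,
      IsHyperbolicPair.matrixLift_hypY]

theorem toTensorMatrix_comp_ofTensorMatrix :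
    (toTensorMatrix Q).comp (ofTensorMatrix Q) = AlgHom.id R _ := by
  ext : 1
  · refine hom_ext <| LinearMap.ext fun m => ?_
    show toTensorMatrix Q (ofTensorMatrix Q (ι Q m ⊗ₜ 1)) = ι Q m ⊗ₜ 1
    rw [ofTensorMatrix_tmul, map_one, mul_one, ofTensorMatrixLeft_ι, map_mul, map_mul,
      toTensorMatrix_ι_inl, toTensorMatrix_ι_inr_zero, toTensorMatrix_ι_inr_one,
      Algebra.TensorProduct.tmul_mul_tmul, Algebra.TensorProduct.tmul_mul_tmul, one_mul, mul_one,
      (Matrix.isHyperbolicPair_hypX_hypY R).mul_mul_self]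
  · refine Matrix.algHom_ext_fin_two ?_ ?_
    · show toTensorMatrix Q (ofTensorMatrix Q (1 ⊗ₜ Matrix.hypX R)) = 1 ⊗ₜ Matrix.hypX R
      rw [ofTensorMatrix_tmul, map_one, one_mul, IsHyperbolicPair.matrixLift_hypX,
        toTensorMatrix_ι_inr_zero]
    · show toTensorMatrix Q (ofTensorMatrix Q (1 ⊗ₜ Matrix.hypY R)) = 1 ⊗ₜ Matrix.hypY R
      rw [ofTensorMatrix_tmul, map_one, one_mul, IsHyperbolicPair.matrixLift_hypY,
        toTensorMatrix_ι_inr_one]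

def prodSqSubSqEquivTensorMatrix :
    CliffordAlgebra (Q.prod (sqSubSq R)) ≃ₐ[R] CliffordAlgebra Q ⊗[R] Matrix (Fin 2) (Fin 2) R :=
  AlgEquiv.ofAlgHom (toTensorMatrix Q) (ofTensorMatrix Q)
    (toTensorMatrix_comp_ofTensorMatrix Q) (ofTensorMatrix_comp_toTensorMatrix Q)

end CliffordAlgebra

theorem clifford_succ_succ_iso (p q : ℕ) :
    Nonempty (CliffordPQ (p + 1) (q + 1) ≃ₐ[ℝ]
      (CliffordPQ p q ⊗[ℝ] Matrix (Fin 2) (Fin 2) ℝ)) :=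
  ⟨(CliffordAlgebra.equivOfIsometry (QuadraticMap.isometryEquivSignWeightsSuccSucc ℝ p q)).trans
    (CliffordAlgebra.prodSqSubSqEquivTensorMatrix _)⟩
end

section
/- Define μ_{p,q} : subsets of {1,…,p+q} → {±1} by μ_{p,q}(I) = ε where v_I² = ε·1 in Cl_{p,q}(ℝ), for v_I the ordered product of the standard orthogonal generators indexed by I (so μ_{p,q}(I) = (−1)^(C(|I|,2)) · (−1)^{|I ∩ {p+1,…,p+q}|}). Then the Arf invariant Arf(μ_{p,q}) = sign(|μ_{p,q}⁻¹(+1)| − |μ_{p,q}⁻¹(−1)|) equals sign(cos((p−q)π/4) + sin((p−q)π/4)). -/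
open Finset Real

/-- The sign of the square of the homogeneous element `v_I` of `Cl_{p,q}(ℝ)`:
`v_I² = μ_{p,q}(I) · 1`, where `μ_{p,q}(I) = (−1)^C(|I|,2) · (−1)^{|I ∩ {p+1,…,p+q}|}`. -/
def muPQ (p q : ℕ) (I : Finset (Fin (p + q))) : ℤ :=
  (-1) ^ (I.card.choose 2) * (-1) ^ (I.filter (fun i : Fin (p + q) => p ≤ (i : ℕ))).card

local notation "G" => GaussianInt

section Aux

lemma key1 (r : ℕ) : ((⟨1,-1⟩ : G) * (⟨0,1⟩:G)^r).re = (-1)^(r.choose 2) ∧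
    ((⟨1,-1⟩ : G) * (⟨0,1⟩:G)^r).im = (-1)^(r.choose 2) * (-1)^(r+1) := by
  induction r with
  | zero => simp [Zsqrtd.re_mul, Zsqrtd.im_mul]
  | succ r ih =>
    obtain ⟨h1, h2⟩ := ih
    rw [pow_succ, ← mul_assoc]
    have hc : (r+1).choose 2 = r + r.choose 2 := by
      rw [Nat.choose_succ_succ, Nat.choose_one_right]
    have he : ∀ k : ℕ, ((-1 : ℤ))^(k*2) = 1 := fun k => by
      rw [mul_comm, pow_mul]; norm_num
    refine ⟨?_, ?_⟩
    · rw [Zsqrtd.re_mul, h1, h2, hc]; ring_nf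
    · rw [Zsqrtd.im_mul, h1, h2, hc]; ring_nf; rw [he]; ring

lemma card_ge (p q : ℕ) :
    ((Finset.univ.filter (fun i : Fin (p+q) => p ≤ (i:ℕ)))).card = q := by
  have h : ((Finset.univ.filter (fun i : Fin (p+q) => p ≤ (i:ℕ)))).card
      = (Finset.univ : Finset (Fin q)).card := by
    refine Finset.card_bij' (fun i hi => (⟨(i:ℕ) - p, by
        simp at hi; have := i.2; omega⟩ : Fin q))
      (fun b _ => (⟨p + (b:ℕ), by have := b.2; omega⟩ : Fin (p+q))) ?_ ?_ ?_ ?_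
    · intro a ha; simp
    · intro b _; simp
    · intro a ha
      simp at ha
      ext
      simp
      omega
    · intro b _
      ext
      simp
  simpa using h

lemma card_lt (p q : ℕ) :
    ((Finset.univ.filter (fun i : Fin (p+q) => ¬ p ≤ (i:ℕ)))).card = p := by
  have h := Finset.card_filter_add_card_filter_not (s := (Finset.univ : Finset (Fin (p+q))))
    (fun i : Fin (p+q) => p ≤ (i:ℕ))
  rw [card_ge, Finset.card_univ, Fintype.card_fin] at h
  omega

def cf (p q : ℕ) : Fin (p+q) → G := fun j => if p ≤ (j:ℕ) then ⟨0,-1⟩ else ⟨0,1⟩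

lemma prod_cf (p q : ℕ) (I : Finset (Fin (p+q))) :
    ∏ j ∈ I, cf p q j
      = ((((-1:ℤ))^((I.filter (fun j : Fin (p+q) => p ≤ (j:ℕ))).card) : ℤ) : G)
        * (⟨0,1⟩:G)^I.card := by
  rw [← Finset.prod_filter_mul_prod_filter_not I (fun j => p ≤ (j:ℕ))]
  have h1 : ∀ j ∈ I.filter (fun j : Fin (p+q) => p ≤ (j:ℕ)), cf p q j = (⟨0,-1⟩ : G) := by
    intro j hj; simp only [Finset.mem_filter] at hj; simp [cf, hj.2]
  have h2 : ∀ j ∈ I.filter (fun j : Fin (p+q) => ¬ p ≤ (j:ℕ)), cf p q j = (⟨0,1⟩ : G) := by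
    intro j hj; simp only [Finset.mem_filter] at hj; simp [cf, hj.2]
  rw [Finset.prod_congr rfl h1, Finset.prod_congr rfl h2, Finset.prod_const, Finset.prod_const]
  have hab := Finset.card_filter_add_card_filter_not
    (s := I) (fun j : Fin (p+q) => p ≤ (j:ℕ))
  rw [← hab, pow_add]
  have : (⟨0,-1⟩ : G) = -⟨0,1⟩ := by ext <;> simp
  rw [this, neg_pow]
  push_cast
  ring

lemma mu_eq (p q : ℕ) (I : Finset (Fin (p+q))) :
    muPQ p q I = ((⟨1,-1⟩:G) * ∏ j ∈ I, cf p q j).re := by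
  rw [prod_cf, mul_left_comm]
  have hm : ∀ (m : ℤ) (w : G), ((m:G) * w).re = m * w.re := by
    intro m w; simp [Zsqrtd.re_mul]
  rw [hm, (key1 I.card).1, muPQ]
  ring

lemma sum_mu (p q : ℕ) : ∑ I : Finset (Fin (p+q)), muPQ p q I
    = ((⟨1,-1⟩:G) * ((⟨1,1⟩:G)^p * (⟨1,-1⟩:G)^q)).re := by
  have hre : ∀ (s : Finset (Finset (Fin (p+q)))) (f : Finset (Fin (p+q)) → G),
      (∑ x ∈ s, f x).re = ∑ x ∈ s, (f x).re := by
    intro s f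
    exact map_sum (AddMonoidHom.mk' Zsqrtd.re (fun a b => rfl)) f s
  calc ∑ I : Finset (Fin (p+q)), muPQ p q I
      = (∑ I : Finset (Fin (p+q)), (⟨1,-1⟩:G) * ∏ j ∈ I, cf p q j).re := by
        rw [hre]; exact Finset.sum_congr rfl (fun I _ => mu_eq p q I)
    _ = ((⟨1,-1⟩:G) * ∑ I : Finset (Fin (p+q)), ∏ j ∈ I, cf p q j).re := by
        rw [Finset.mul_sum]
    _ = ((⟨1,-1⟩:G) * ((⟨1,1⟩:G)^p * (⟨1,-1⟩:G)^q)).re := by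
        congr 2
        rw [← Finset.powerset_univ]
        have h2 : ∏ j ∈ (Finset.univ : Finset (Fin (p+q))), (cf p q j + 1)
            = ∑ t ∈ (Finset.univ : Finset (Fin (p+q))).powerset, ∏ j ∈ t, cf p q j := by
          rw [Finset.prod_add]; simp
        rw [← h2, ← Finset.prod_filter_mul_prod_filter_not Finset.univ
          (fun j : Fin (p+q) => p ≤ (j:ℕ))]
        have h3 : ∀ j ∈ Finset.univ.filter (fun j : Fin (p+q) => p ≤ (j:ℕ)),
            cf p q j + 1 = (⟨1,-1⟩ : G) := by
          intro j hj; simp only [Finset.mem_filter] at hj; simp [cf, hj.2]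
          ext <;> simp
        have h4 : ∀ j ∈ Finset.univ.filter (fun j : Fin (p+q) => ¬ p ≤ (j:ℕ)),
            cf p q j + 1 = (⟨1,1⟩ : G) := by
          intro j hj; simp only [Finset.mem_filter] at hj; simp [cf, hj.2]
          ext <;> simp
        rw [Finset.prod_congr rfl h3, Finset.prod_congr rfl h4, Finset.prod_const,
          Finset.prod_const]
        rw [card_ge, card_lt]
        ring

/-- The target sign statement, as a function of `p q`. -/
def SPQ (p q : ℕ) : Prop :=
  ((((⟨1,-1⟩:G) * ((⟨1,1⟩:G)^p * (⟨1,-1⟩:G)^q)).re).sign : ℝ)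
    = Real.sign (Real.cos (((p:ℝ) - q) * π/4) + Real.sin (((p:ℝ) - q) * π/4))

lemma hre2 : ∀ (m : ℤ) (w : G), ((m:G) * w).re = m * w.re := by
  intro m w; simp [Zsqrtd.re_mul]

lemma step1 (p q : ℕ) (h : SPQ p q) : SPQ (p+1) (q+1) := by
  unfold SPQ at h ⊢
  have h2 : (⟨1,1⟩:G) * ⟨1,-1⟩ = ((2:ℤ):G) := by decide
  have hz : ((⟨1,-1⟩:G) * ((⟨1,1⟩:G)^(p+1) * (⟨1,-1⟩:G)^(q+1)))
      = ((2:ℤ):G) * ((⟨1,-1⟩:G) * ((⟨1,1⟩:G)^p * (⟨1,-1⟩:G)^q)) := by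
    rw [pow_succ, pow_succ]
    linear_combination ((⟨1,-1⟩:G) * ((⟨1,1⟩:G)^p * (⟨1,-1⟩:G)^q)) * h2
  rw [hz, hre2, Int.sign_mul, show (2:ℤ).sign = 1 from rfl, one_mul]
  have harg : ((p+1:ℕ):ℝ) - ((q+1:ℕ):ℝ) = (p:ℝ) - (q:ℝ) := by push_cast; ring
  rw [harg]
  exact h

lemma step8p (p : ℕ) (h : SPQ p 0) : SPQ (p+8) 0 := by
  unfold SPQ at h ⊢
  have h16 : (⟨1,1⟩:G)^8 = ((16:ℤ):G) := by decide
  have hz : ((⟨1,-1⟩:G) * ((⟨1,1⟩:G)^(p+8) * (⟨1,-1⟩:G)^0))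
      = ((16:ℤ):G) * ((⟨1,-1⟩:G) * ((⟨1,1⟩:G)^p * (⟨1,-1⟩:G)^0)) := by
    rw [pow_add]
    linear_combination ((⟨1,-1⟩:G) * ((⟨1,1⟩:G)^p * (⟨1,-1⟩:G)^0)) * h16
  rw [hz, hre2, Int.sign_mul, show (16:ℤ).sign = 1 from rfl, one_mul]
  have harg : (((p+8:ℕ):ℝ) - ((0:ℕ):ℝ)) * π/4 = (((p:ℕ):ℝ) - ((0:ℕ):ℝ)) * π/4 + 2*π := by
    push_cast; ring
  rw [harg, Real.cos_add_two_pi, Real.sin_add_two_pi]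
  exact h

lemma step8q (q : ℕ) (h : SPQ 0 q) : SPQ 0 (q+8) := by
  unfold SPQ at h ⊢
  have h16 : (⟨1,-1⟩:G)^8 = ((16:ℤ):G) := by decide
  have hz : ((⟨1,-1⟩:G) * ((⟨1,1⟩:G)^0 * (⟨1,-1⟩:G)^(q+8)))
      = ((16:ℤ):G) * ((⟨1,-1⟩:G) * ((⟨1,1⟩:G)^0 * (⟨1,-1⟩:G)^q)) := by
    rw [pow_add]
    linear_combination ((⟨1,-1⟩:G) * ((⟨1,1⟩:G)^0 * (⟨1,-1⟩:G)^q)) * h16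
  rw [hz, hre2, Int.sign_mul, show (16:ℤ).sign = 1 from rfl, one_mul]
  have harg : (((0:ℕ):ℝ) - ((q+8:ℕ):ℝ)) * π/4 = (((0:ℕ):ℝ) - ((q:ℕ):ℝ)) * π/4 - 2*π := by
    push_cast; ring
  rw [harg, Real.cos_sub_two_pi, Real.sin_sub_two_pi]
  exact h

lemma sqrt2_pos : (0:ℝ) < Real.sqrt 2 := Real.sqrt_pos.mpr (by norm_num)

end Aux

section Base

lemma spq00 : SPQ 0 0 := by
  unfold SPQ
  rw [show (((⟨1,-1⟩:G) * ((⟨1,1⟩:G)^0 * (⟨1,-1⟩:G)^0)).re).sign = 1 from by decide]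
  rw [show (((0:ℕ):ℝ) - ((0:ℕ):ℝ)) * π/4 = 0 from by push_cast; ring,
    Real.cos_zero, Real.sin_zero]
  norm_num [Real.sign_one]

lemma spq10 : SPQ 1 0 := by
  unfold SPQ
  rw [show (((⟨1,-1⟩:G) * ((⟨1,1⟩:G)^1 * (⟨1,-1⟩:G)^0)).re).sign = 1 from by decide]
  rw [show (((1:ℕ):ℝ) - ((0:ℕ):ℝ)) * π/4 = π/4 from by push_cast; ring,
    Real.cos_pi_div_four, Real.sin_pi_div_four]
  rw [Real.sign_of_pos (by positivity)]
  norm_num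

lemma spq20 : SPQ 2 0 := by
  unfold SPQ
  rw [show (((⟨1,-1⟩:G) * ((⟨1,1⟩:G)^2 * (⟨1,-1⟩:G)^0)).re).sign = 1 from by decide]
  rw [show (((2:ℕ):ℝ) - ((0:ℕ):ℝ)) * π/4 = π/2 from by push_cast; ring,
    Real.cos_pi_div_two, Real.sin_pi_div_two]
  rw [Real.sign_of_pos (by norm_num)]
  norm_num

lemma spq30 : SPQ 3 0 := by
  unfold SPQ
  rw [show (((⟨1,-1⟩:G) * ((⟨1,1⟩:G)^3 * (⟨1,-1⟩:G)^0)).re).sign = 0 from by decide]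
  rw [show (((3:ℕ):ℝ) - ((0:ℕ):ℝ)) * π/4 = π - π/4 from by push_cast; ring]
  rw [Real.cos_pi_sub, Real.sin_pi_sub, Real.cos_pi_div_four, Real.sin_pi_div_four]
  norm_num [Real.sign_zero]

lemma spq40 : SPQ 4 0 := by
  unfold SPQ
  rw [show (((⟨1,-1⟩:G) * ((⟨1,1⟩:G)^4 * (⟨1,-1⟩:G)^0)).re).sign = -1 from by decide]
  rw [show (((4:ℕ):ℝ) - ((0:ℕ):ℝ)) * π/4 = π from by push_cast; ring,
    Real.cos_pi, Real.sin_pi]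
  rw [Real.sign_of_neg (by norm_num)]
  norm_num

lemma spq50 : SPQ 5 0 := by
  unfold SPQ
  rw [show (((⟨1,-1⟩:G) * ((⟨1,1⟩:G)^5 * (⟨1,-1⟩:G)^0)).re).sign = -1 from by decide]
  rw [show (((5:ℕ):ℝ) - ((0:ℕ):ℝ)) * π/4 = π/4 + π from by push_cast; ring]
  rw [Real.cos_add_pi, Real.sin_add_pi, Real.cos_pi_div_four, Real.sin_pi_div_four]
  rw [Real.sign_of_neg (by linarith [sqrt2_pos])]
  norm_num

lemma spq60 : SPQ 6 0 := by
  unfold SPQ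
  rw [show (((⟨1,-1⟩:G) * ((⟨1,1⟩:G)^6 * (⟨1,-1⟩:G)^0)).re).sign = -1 from by decide]
  rw [show (((6:ℕ):ℝ) - ((0:ℕ):ℝ)) * π/4 = π/2 + π from by push_cast; ring]
  rw [Real.cos_add_pi, Real.sin_add_pi, Real.cos_pi_div_two, Real.sin_pi_div_two]
  rw [Real.sign_of_neg (by norm_num)]
  norm_num

lemma spq70 : SPQ 7 0 := by
  unfold SPQ
  rw [show (((⟨1,-1⟩:G) * ((⟨1,1⟩:G)^7 * (⟨1,-1⟩:G)^0)).re).sign = 0 from by decide]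
  rw [show (((7:ℕ):ℝ) - ((0:ℕ):ℝ)) * π/4 = 2*π - π/4 from by push_cast; ring]
  rw [Real.cos_two_pi_sub, Real.sin_two_pi_sub, Real.cos_pi_div_four, Real.sin_pi_div_four]
  norm_num [Real.sign_zero]

lemma spq01 : SPQ 0 1 := by
  unfold SPQ
  rw [show (((⟨1,-1⟩:G) * ((⟨1,1⟩:G)^0 * (⟨1,-1⟩:G)^1)).re).sign = 0 from by decide]
  rw [show (((0:ℕ):ℝ) - ((1:ℕ):ℝ)) * π/4 = -(π/4) from by push_cast; ring]
  rw [Real.cos_neg, Real.sin_neg, Real.cos_pi_div_four, Real.sin_pi_div_four]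
  norm_num [Real.sign_zero]

lemma spq02 : SPQ 0 2 := by
  unfold SPQ
  rw [show (((⟨1,-1⟩:G) * ((⟨1,1⟩:G)^0 * (⟨1,-1⟩:G)^2)).re).sign = -1 from by decide]
  rw [show (((0:ℕ):ℝ) - ((2:ℕ):ℝ)) * π/4 = -(π/2) from by push_cast; ring]
  rw [Real.cos_neg, Real.sin_neg, Real.cos_pi_div_two, Real.sin_pi_div_two]
  rw [Real.sign_of_neg (by norm_num)]
  norm_num

lemma spq03 : SPQ 0 3 := by
  unfold SPQ
  rw [show (((⟨1,-1⟩:G) * ((⟨1,1⟩:G)^0 * (⟨1,-1⟩:G)^3)).re).sign = -1 from by decide]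
  rw [show (((0:ℕ):ℝ) - ((3:ℕ):ℝ)) * π/4 = -(π - π/4) from by push_cast; ring]
  rw [Real.cos_neg, Real.sin_neg, Real.cos_pi_sub, Real.sin_pi_sub,
    Real.cos_pi_div_four, Real.sin_pi_div_four]
  rw [Real.sign_of_neg (by linarith [sqrt2_pos])]
  norm_num

lemma spq04 : SPQ 0 4 := by
  unfold SPQ
  rw [show (((⟨1,-1⟩:G) * ((⟨1,1⟩:G)^0 * (⟨1,-1⟩:G)^4)).re).sign = -1 from by decide]
  rw [show (((0:ℕ):ℝ) - ((4:ℕ):ℝ)) * π/4 = -π from by push_cast; ring]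
  rw [Real.cos_neg, Real.sin_neg, Real.cos_pi, Real.sin_pi]
  rw [Real.sign_of_neg (by norm_num)]
  norm_num

lemma spq05 : SPQ 0 5 := by
  unfold SPQ
  rw [show (((⟨1,-1⟩:G) * ((⟨1,1⟩:G)^0 * (⟨1,-1⟩:G)^5)).re).sign = 0 from by decide]
  rw [show (((0:ℕ):ℝ) - ((5:ℕ):ℝ)) * π/4 = -(π/4 + π) from by push_cast; ring]
  rw [Real.cos_neg, Real.sin_neg, Real.cos_add_pi, Real.sin_add_pi,
    Real.cos_pi_div_four, Real.sin_pi_div_four]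
  norm_num [Real.sign_zero]

lemma spq06 : SPQ 0 6 := by
  unfold SPQ
  rw [show (((⟨1,-1⟩:G) * ((⟨1,1⟩:G)^0 * (⟨1,-1⟩:G)^6)).re).sign = 1 from by decide]
  rw [show (((0:ℕ):ℝ) - ((6:ℕ):ℝ)) * π/4 = -(π/2 + π) from by push_cast; ring]
  rw [Real.cos_neg, Real.sin_neg, Real.cos_add_pi, Real.sin_add_pi,
    Real.cos_pi_div_two, Real.sin_pi_div_two]
  rw [Real.sign_of_pos (by norm_num)]
  norm_num

lemma spq07 : SPQ 0 7 := by
  unfold SPQ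
  rw [show (((⟨1,-1⟩:G) * ((⟨1,1⟩:G)^0 * (⟨1,-1⟩:G)^7)).re).sign = 1 from by decide]
  rw [show (((0:ℕ):ℝ) - ((7:ℕ):ℝ)) * π/4 = -(2*π - π/4) from by push_cast; ring]
  rw [Real.cos_neg, Real.sin_neg, Real.cos_two_pi_sub, Real.sin_two_pi_sub,
    Real.cos_pi_div_four, Real.sin_pi_div_four]
  rw [Real.sign_of_pos (by linarith [sqrt2_pos])]
  norm_num

end Base

lemma allp0 : ∀ p, SPQ p 0 := by
  intro p
  induction p using Nat.strong_induction_on with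
  | _ p ih =>
    rcases Nat.lt_or_ge p 8 with h | h
    · interval_cases p
      · exact spq00
      · exact spq10
      · exact spq20
      · exact spq30
      · exact spq40
      · exact spq50
      · exact spq60
      · exact spq70
    · obtain ⟨m, rfl⟩ : ∃ m, p = m + 8 := ⟨p - 8, by omega⟩
      exact step8p m (ih m (by omega))

lemma all0q : ∀ q, SPQ 0 q := by
  intro q
  induction q using Nat.strong_induction_on with
  | _ q ih =>
    rcases Nat.lt_or_ge q 8 with h | h
    · interval_cases q
      · exact spq00
      · exact spq01
      · exact spq02
      · exact spq03
      · exact spq04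
      · exact spq05
      · exact spq06
      · exact spq07
    · obtain ⟨m, rfl⟩ : ∃ m, q = m + 8 := ⟨q - 8, by omega⟩
      exact step8q m (ih m (by omega))

lemma main3 : ∀ p q, SPQ p q := by
  intro p q
  induction q generalizing p with
  | zero => exact allp0 p
  | succ q ih =>
    cases p with
    | zero => exact all0q (q+1)
    | succ p => exact step1 p q (ih p)

lemma signCast (m : ℤ) : Real.sign ((m:ℝ)) = (m.sign : ℝ) := by
  rcases lt_trichotomy m 0 with h | h | h
  · rw [Real.sign_of_neg (by exact_mod_cast h), Int.sign_eq_neg_one_iff_neg.mpr h]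
    norm_num
  · subst h; simp [Real.sign_zero]
  · rw [Real.sign_of_pos (by exact_mod_cast h), Int.sign_eq_one_iff_pos.mpr h]
    norm_num

theorem arf_invariant_clifford (p q : ℕ) :
    Real.sign
        (((Finset.univ.filter fun I : Finset (Fin (p + q)) => muPQ p q I = 1).card : ℝ) -
          ((Finset.univ.filter fun I : Finset (Fin (p + q)) => muPQ p q I = -1).card : ℝ)) =
      Real.sign (Real.cos (((p : ℝ) - q) * π / 4) + Real.sin (((p : ℝ) - q) * π / 4)) := by
  have hdich : ∀ I : Finset (Fin (p+q)), muPQ p q I = 1 ∨ muPQ p q I = -1 := by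
    intro I
    unfold muPQ
    rcases Nat.even_or_odd (I.card.choose 2) with h | h <;>
      rcases Nat.even_or_odd ((I.filter (fun i : Fin (p+q) => p ≤ (i:ℕ))).card) with h' | h' <;>
      simp [h.neg_one_pow, h'.neg_one_pow, Odd.neg_one_pow, *]
  have hsum : ((Finset.univ.filter fun I : Finset (Fin (p + q)) => muPQ p q I = 1).card : ℤ) -
      ((Finset.univ.filter fun I : Finset (Fin (p + q)) => muPQ p q I = -1).card : ℤ)
      = ∑ I : Finset (Fin (p+q)), muPQ p q I := by
    rw [← Finset.sum_filter_add_sum_filter_not Finset.univ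
      (fun I : Finset (Fin (p+q)) => muPQ p q I = 1)]
    have e1 : ∑ I ∈ Finset.univ.filter (fun I : Finset (Fin (p+q)) => muPQ p q I = 1),
        muPQ p q I
        = ((Finset.univ.filter fun I : Finset (Fin (p + q)) => muPQ p q I = 1).card : ℤ) := by
      rw [Finset.sum_congr rfl (fun I hI => (Finset.mem_filter.mp hI).2), Finset.sum_const]
      simp
    have e2 : Finset.univ.filter (fun I : Finset (Fin (p+q)) => ¬ muPQ p q I = 1)
        = Finset.univ.filter (fun I : Finset (Fin (p+q)) => muPQ p q I = -1) := by
      apply Finset.filter_congr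
      intro I _
      rcases hdich I with h | h <;> simp [h]
    rw [e2]
    have e3 : ∑ I ∈ Finset.univ.filter (fun I : Finset (Fin (p+q)) => muPQ p q I = -1),
        muPQ p q I
        = -((Finset.univ.filter fun I : Finset (Fin (p + q)) => muPQ p q I = -1).card : ℤ) := by
      rw [Finset.sum_congr rfl (fun I hI => (Finset.mem_filter.mp hI).2), Finset.sum_const]
      simp
    rw [e1, e3]
    ring
  have hc : ((Finset.univ.filter fun I : Finset (Fin (p + q)) => muPQ p q I = 1).card : ℝ) -
      ((Finset.univ.filter fun I : Finset (Fin (p + q)) => muPQ p q I = -1).card : ℝ)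
      = ((((Finset.univ.filter fun I : Finset (Fin (p + q)) => muPQ p q I = 1).card : ℤ) -
        ((Finset.univ.filter fun I : Finset (Fin (p + q)) => muPQ p q I = -1).card : ℤ) : ℤ) : ℝ) := by
    push_cast
    ring
  rw [hc, signCast, hsum, sum_mu]
  exact main3 p q
end

section
/- For natural numbers p, q with N = p+q, let μ_{p,q}(I) = (−1)^(C(|I|,2)) · (−1)^{|I ∩ {p+1,…,N}|} for I ⊆ {1,…,N}. Then the difference |μ_{N,0}⁻¹(+1)| − |μ_{N,0}⁻¹(−1)| equals 2^(N/2)(cos(Nπ/4) + sin(Nπ/4)), and |μ_{0,N}⁻¹(+1)| − |μ_{0,N}⁻¹(−1)| equals 2^(N/2)(cos(Nπ/4) − sin(Nπ/4)). -/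
open Finset Real

/-- integer recursion: a(n+1) = a n + b n, b(n+1) = b n - a n -/
def abSeq : ℕ → ℤ × ℤ
  | 0 => (1, 1)
  | n + 1 => ((abSeq n).1 + (abSeq n).2, (abSeq n).2 - (abSeq n).1)

lemma sum_pow_eq {α : Type*} [DecidableEq α] (s : Finset α) :
    (∑ I ∈ s.powerset, (-1:ℤ)^(I.card.choose 2) = (abSeq s.card).1) ∧
    (∑ I ∈ s.powerset, (-1:ℤ)^(I.card.choose 2 + I.card) = (abSeq s.card).2) := by
  induction s using Finset.induction_on with
  | empty => simp [abSeq]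
  | @insert x s hx ih =>
    have hcard : ∀ t ∈ s.powerset, (insert x t).card = t.card + 1 := by
      intro t ht
      rw [Finset.mem_powerset] at ht
      exact Finset.card_insert_of_notMem fun h => hx (ht h)
    have hch : ∀ k : ℕ, (k + 1).choose 2 = k.choose 2 + k := by
      intro k
      rw [Nat.choose_succ_succ]
      simp [Nat.choose_one_right, Nat.add_comm]
    constructor
    · rw [Finset.sum_powerset_insert hx, Finset.card_insert_of_notMem hx]
      have : ∑ t ∈ s.powerset, (-1:ℤ)^((insert x t).card.choose 2)
          = ∑ t ∈ s.powerset, (-1:ℤ)^(t.card.choose 2 + t.card) := by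
        refine Finset.sum_congr rfl fun t ht => ?_
        rw [hcard t ht, hch]
      rw [this, ih.1, ih.2, abSeq]
    · rw [Finset.sum_powerset_insert hx, Finset.card_insert_of_notMem hx]
      have : ∑ t ∈ s.powerset, (-1:ℤ)^((insert x t).card.choose 2 + (insert x t).card)
          = ∑ t ∈ s.powerset, -((-1:ℤ)^(t.card.choose 2)) := by
        refine Finset.sum_congr rfl fun t ht => ?_
        rw [hcard t ht, hch]
        have : t.card.choose 2 + t.card + (t.card + 1)
            = t.card.choose 2 + (t.card + t.card) + 1 := by ring
        rw [this, pow_add, pow_add, Even.neg_one_pow ⟨t.card, rfl⟩]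
        ring
      rw [this, Finset.sum_neg_distrib, ih.1, ih.2, abSeq]
      ring

lemma abSeq_real (n : ℕ) :
    (((abSeq n).1 : ℝ) = (Real.sqrt 2) ^ n * (Real.cos (n * π / 4) + Real.sin (n * π / 4))) ∧
    (((abSeq n).2 : ℝ) = (Real.sqrt 2) ^ n * (Real.cos (n * π / 4) - Real.sin (n * π / 4))) := by
  have h2 : Real.sqrt 2 * Real.sqrt 2 = 2 := Real.mul_self_sqrt (by norm_num)
  induction n with
  | zero => simp [abSeq]
  | succ n ih =>
    have hang : ((n : ℝ) + 1) * π / 4 = (n : ℝ) * π / 4 + π / 4 := by ring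
    constructor
    · show (((abSeq n).1 + (abSeq n).2 : ℤ) : ℝ) = _
      push_cast [ih.1, ih.2]
      rw [hang, Real.cos_add, Real.sin_add, Real.cos_pi_div_four, Real.sin_pi_div_four,
        pow_succ]
      linear_combination (-(Real.sqrt 2 ^ n * Real.cos ((n:ℝ) * π / 4))) * h2
    · show (((abSeq n).2 - (abSeq n).1 : ℤ) : ℝ) = _
      push_cast [ih.1, ih.2]
      rw [hang, Real.cos_add, Real.sin_add, Real.cos_pi_div_four, Real.sin_pi_div_four,
        pow_succ]
      linear_combination (Real.sqrt 2 ^ n * Real.sin ((n:ℝ) * π / 4)) * h2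

lemma count_sub {n : ℕ} (f : Finset (Fin n) → ℤ) (hf : ∀ I, f I = 1 ∨ f I = -1) :
    ((Finset.univ.filter fun I => f I = 1).card : ℤ) -
      ((Finset.univ.filter fun I => f I = -1).card : ℤ) = ∑ I : Finset (Fin n), f I := by
  rw [← Finset.sum_filter_add_sum_filter_not Finset.univ (fun I => f I = 1) f]
  have h1 : ∑ I ∈ Finset.univ.filter (fun I => f I = 1), f I
      = ((Finset.univ.filter fun I => f I = 1).card : ℤ) := by
    rw [Finset.sum_congr rfl (fun I hI => (Finset.mem_filter.mp hI).2), Finset.sum_const]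
    simp
  have hfil : Finset.univ.filter (fun I => ¬ f I = 1)
      = Finset.univ.filter (fun I => f I = -1) := by
    refine Finset.filter_congr fun I _ => ?_
    rcases hf I with h | h <;> simp [h]
  have h2 : ∑ I ∈ Finset.univ.filter (fun I => ¬ f I = 1), f I
      = -((Finset.univ.filter fun I => f I = -1).card : ℤ) := by
    rw [hfil, Finset.sum_congr rfl (fun I hI => (Finset.mem_filter.mp hI).2), Finset.sum_const]
    simp
  rw [h1, h2]
  ring

lemma neg_one_pow_cases (m : ℕ) : ((-1:ℤ))^m = 1 ∨ ((-1:ℤ))^m = -1 :=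
  (Nat.even_or_odd m).imp Even.neg_one_pow Odd.neg_one_pow

theorem mu_definite_count_difference (N : ℕ) :
    (((Finset.univ.filter fun I : Finset (Fin (N + 0)) => muPQ N 0 I = 1).card : ℝ) -
        ((Finset.univ.filter fun I : Finset (Fin (N + 0)) => muPQ N 0 I = -1).card : ℝ) =
      (Real.sqrt 2) ^ N * (Real.cos (N * π / 4) + Real.sin (N * π / 4))) ∧
    (((Finset.univ.filter fun I : Finset (Fin (0 + N)) => muPQ 0 N I = 1).card : ℝ) -
        ((Finset.univ.filter fun I : Finset (Fin (0 + N)) => muPQ 0 N I = -1).card : ℝ) =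
      (Real.sqrt 2) ^ N * (Real.cos (N * π / 4) - Real.sin (N * π / 4))) := by
  constructor
  · have hμ : ∀ I : Finset (Fin (N + 0)), muPQ N 0 I = (-1)^(I.card.choose 2) := by
      intro I
      unfold muPQ
      rw [Finset.filter_false_of_mem (fun i _ => by have := i.isLt; omega)]
      simp
    have hf : ∀ I : Finset (Fin (N + 0)), muPQ N 0 I = 1 ∨ muPQ N 0 I = -1 := by
      intro I; rw [hμ]; exact neg_one_pow_cases _
    have key := count_sub (muPQ N 0) hf
    have hsum : ∑ I : Finset (Fin (N + 0)), muPQ N 0 I = (abSeq N).1 := by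
      rw [Finset.sum_congr rfl (fun I _ => hμ I)]
      have := (sum_pow_eq (Finset.univ : Finset (Fin (N + 0)))).1
      rw [Finset.powerset_univ] at this
      simpa using this
    rw [hsum] at key
    have := congrArg (Int.cast : ℤ → ℝ) key
    push_cast at this
    rw [this, (abSeq_real N).1]
  · have hμ : ∀ I : Finset (Fin (0 + N)), muPQ 0 N I = (-1)^(I.card.choose 2 + I.card) := by
      intro I
      unfold muPQ
      rw [Finset.filter_true_of_mem (fun i _ => Nat.zero_le _), pow_add]
    have hf : ∀ I : Finset (Fin (0 + N)), muPQ 0 N I = 1 ∨ muPQ 0 N I = -1 := by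
      intro I; rw [hμ]; exact neg_one_pow_cases _
    have key := count_sub (muPQ 0 N) hf
    have hsum : ∑ I : Finset (Fin (0 + N)), muPQ 0 N I = (abSeq N).2 := by
      rw [Finset.sum_congr rfl (fun I _ => hμ I)]
      have := (sum_pow_eq (Finset.univ : Finset (Fin (0 + N)))).2
      rw [Finset.powerset_univ] at this
      simpa using this
    rw [hsum] at key
    have := congrArg (Int.cast : ℤ → ℝ) key
    push_cast at this
    rw [this, (abSeq_real N).2]
end
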